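/- arXiv:0904.2814 — 8 statements merged into one kernel-verified Lean document; each statement's English description precedes it below -/
import Mathlib

section
/- Let n ≥ 2 and let u ∈ C²(B₁ ∖ {0}), where B₁ ⊂ ℝⁿ is the open unit ball centered at the origin. Assume λ₁(∇²u)(x) + λ₂(∇²u)(x) ≤ 0 for all x ∈ B₁ ∖ {0} and inf_{B₁ ∖ {0}} u > −∞. Then u satisfies condition (★) with radius r̄ = 1. -/
open Filter Metric Set MeasureTheory Topology

attribute [local instance] Matrix.normedAddCommGroup Matrix.normedSpace

noncomputable section

/-- The Hessian matrix `∇²u(x)` of `u : ℝⁿ → ℝ` at `x`. -/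
def hessianMatrix (n : ℕ) (u : EuclideanSpace ℝ (Fin n) → ℝ)
    (x : EuclideanSpace ℝ (Fin n)) : Matrix (Fin n) (Fin n) ℝ :=
  fun i j => iteratedFDeriv ℝ 2 u x ![EuclideanSpace.single i 1, EuclideanSpace.single j 1]

/-- The eigenvalues `λ₁(M) ≤ ⋯ ≤ λₙ(M)` of a real symmetric matrix `M`, in
nondecreasing order (junk value if `M` is not symmetric): `sortedEig n M i = λ_{i+1}(M)`. -/
def sortedEig (n : ℕ) (M : Matrix (Fin n) (Fin n) ℝ) : Fin n → ℝ :=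
  if hM : M.IsHermitian then hM.eigenvalues ∘ Tuple.sort hM.eigenvalues else 0

/-- `λ₁(M) + ⋯ + λ_k(M)`, the sum of the `k` smallest eigenvalues of `M`. -/
def sumLowEig (n k : ℕ) (M : Matrix (Fin n) (Fin n) ℝ) : ℝ :=
  ∑ i ∈ Finset.univ.filter fun i : Fin n => (i : ℕ) < k, sortedEig n M i

/-- Condition (★) with radius `rbar`: for every vector `V`, the function
`w(x) = u(x) + V·x` satisfies `inf_{B_r ∖ {0}} w = min_{∂B_r} w` for all `0 < r < rbar`
(the minimum on the sphere is attained and equals the infimum over the punctured ball). -/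
def StarCond (n : ℕ) (u : EuclideanSpace ℝ (Fin n) → ℝ) (rbar : ℝ) : Prop :=
  ∀ V : EuclideanSpace ℝ (Fin n), ∀ r : ℝ, 0 < r → r < rbar →
    IsLeast ((fun x => u x + (inner ℝ V x : ℝ)) '' sphere (0 : EuclideanSpace ℝ (Fin n)) r)
      (sInf ((fun x => u x + (inner ℝ V x : ℝ)) '' (ball (0 : EuclideanSpace ℝ (Fin n)) r \ {0})))

/-- The matrix `(∂G/∂M_ij)` of partial derivatives of a function `G` of a matrix variable. -/
def derivMatrix (n : ℕ) (G : Matrix (Fin n) (Fin n) ℝ → ℝ) (M : Matrix (Fin n) (Fin n) ℝ) :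
    Matrix (Fin n) (Fin n) ℝ :=
  fun i j => fderiv ℝ G M (Matrix.single i j 1)

/-!
Set `w(x) = u(x) + V·x`, fix `r < 1` and let `m` be the minimum of `w` on `∂B_r`.
The log-log barrier `φ(x) = log(-log ‖x‖²)` blows up at the origin, and its second
derivatives along any two orthonormal directions add up to something negative on
`0 < ‖x‖ < 1`. Hence for `δ > 0` the function `w + δφ` has no local minimum there: at one,
the second derivatives of `w` along two eigenvectors of `∇²u` sum to `λᵢ + λⱼ ≤ 0`.
Minimising `w + δφ` over an annulus `ε ≤ ‖x‖ ≤ r`, with `ε` so small that `δφ` dominates on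
the inner sphere, the minimum is attained on the outer sphere, so `m + δφ(r) ≤ w + δφ` on
`B_r ∖ {0}`. Letting `δ → 0` gives `m ≤ w`, and `m` is the infimum since `∂B_r` lies in the
closure of `B_r ∖ {0}`.
-/

open scoped InnerProductSpace Matrix

def HasSecondDerivAt (f f' : ℝ → ℝ) (f'' x : ℝ) : Prop :=
  (∀ᶠ t in 𝓝 x, HasDerivAt f (f' t) t) ∧ HasDerivAt f' f'' x

namespace HasSecondDerivAt

variable {f f' g g' : ℝ → ℝ} {f'' g'' x : ℝ}

theorem add (hf : HasSecondDerivAt f f' f'' x) (hg : HasSecondDerivAt g g' g'' x) :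
    HasSecondDerivAt (fun t => f t + g t) (fun t => f' t + g' t) (f'' + g'') x :=
  ⟨(hf.1.and hg.1).mono fun _ h => h.1.add h.2, hf.2.add hg.2⟩

theorem const_mul (c : ℝ) (hf : HasSecondDerivAt f f' f'' x) :
    HasSecondDerivAt (fun t => c * f t) (fun t => c * f' t) (c * f'') x :=
  ⟨hf.1.mono fun _ h => h.const_mul c, hf.2.const_mul c⟩

theorem comp (hg : HasSecondDerivAt g g' g'' (f x)) (hf : HasSecondDerivAt f f' f'' x) :
    HasSecondDerivAt (fun t => g (f t)) (fun t => g' (f t) * f' t)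
      (g'' * f' x * f' x + g' (f x) * f'') x := by
  have hfx : HasDerivAt f (f' x) x := hf.1.self_of_nhds
  refine ⟨?_, (hg.2.comp x hfx).mul hf.2⟩
  filter_upwards [hf.1, hfx.continuousAt.tendsto.eventually hg.1] with t hft hgt
  exact hgt.comp t hft

end HasSecondDerivAt

theorem IsLocalMin.nonneg_of_hasSecondDerivAt {f f' : ℝ → ℝ} {f'' x : ℝ}
    (hmin : IsLocalMin f x) (hf : HasSecondDerivAt f f' f'' x) : 0 ≤ f'' := by
  have hderiv' : deriv f =ᶠ[𝓝 x] f' := hf.1.mono fun _ h => h.deriv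
  have hderiv : deriv (deriv f) x = f'' := hderiv'.deriv_eq.trans hf.2.deriv
  by_contra! hneg
  -- by the second derivative test `f` would also have a local maximum at `x`
  have hmax : IsLocalMax f x := isLocalMax_of_deriv_deriv_neg (hderiv ▸ hneg)
    hmin.deriv_eq_zero hf.1.self_of_nhds.continuousAt
  have hconst : f =ᶠ[𝓝 x] fun _ => f x := (hmin.and hmax).mono fun _ h => le_antisymm h.2 h.1
  have hderiv0 : deriv f =ᶠ[𝓝 x] fun _ => 0 :=
    hconst.eventuallyEq_nhds.mono fun t ht => ht.deriv_eq.trans (deriv_const t _)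
  rw [hderiv0.deriv_eq, deriv_const] at hderiv
  linarith

section Line

variable {E : Type*} [NormedAddCommGroup E]

theorem hasDerivAt_line [NormedSpace ℝ E] (x e : E) (t : ℝ) :
    HasDerivAt (fun s : ℝ => x + s • e) e t := by
  simpa using ((hasDerivAt_id t).smul_const e).const_add x

theorem ContDiffAt.hasSecondDerivAt_line [NormedSpace ℝ E] {u : E → ℝ} {x : E}
    (hu : ContDiffAt ℝ 2 u x) (e : E) :
    HasSecondDerivAt (fun t => u (x + t • e)) (fun t => fderiv ℝ u (x + t • e) e)
      (fderiv ℝ (fderiv ℝ u) x e e) 0 := by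
  have hx : x + (0 : ℝ) • e = x := by simp
  have hdiff : ∀ᶠ y in 𝓝 (x + (0 : ℝ) • e), DifferentiableAt ℝ u y := by
    rw [hx]
    exact (hu.eventually (by simp)).mono fun y hy => hy.differentiableAt (by norm_num)
  refine ⟨?_, ?_⟩
  · filter_upwards [(hasDerivAt_line x e 0).continuousAt.tendsto.eventually hdiff] with t ht
    exact ht.hasFDerivAt.comp_hasDerivAt t (hasDerivAt_line x e t)
  · have hfd : HasFDerivAt (fderiv ℝ u) (fderiv ℝ (fderiv ℝ u) x) (x + (0 : ℝ) • e) := by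
      rw [hx]
      exact ((hu.fderiv_right (m := 1) le_rfl).differentiableAt one_ne_zero).hasFDerivAt
    exact (ContinuousLinearMap.apply ℝ ℝ e).hasFDerivAt.comp_hasDerivAt 0
      (hfd.comp_hasDerivAt 0 (hasDerivAt_line x e 0))

variable [InnerProductSpace ℝ E]

theorem hasSecondDerivAt_inner_line (V x e : E) :
    HasSecondDerivAt (fun t => ⟪V, x + t • e⟫_ℝ) (fun _ => ⟪V, e⟫_ℝ) 0 0 :=
  ⟨Eventually.of_forall fun t => by
    simpa using (hasDerivAt_const t V).inner ℝ (hasDerivAt_line x e t), hasDerivAt_const _ _⟩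

theorem hasSecondDerivAt_norm_sq_line (x e : E) :
    HasSecondDerivAt (fun t => ‖x + t • e‖ ^ 2) (fun t => 2 * ⟪x + t • e, e⟫_ℝ)
      (2 * ‖e‖ ^ 2) 0 := by
  refine ⟨Eventually.of_forall fun t => (hasDerivAt_line x e t).norm_sq, ?_⟩
  simpa [real_inner_self_eq_norm_sq] using
    ((hasDerivAt_line x e 0).inner ℝ (hasDerivAt_const 0 e)).const_mul 2

end Line

def logLogBarrier (s : ℝ) : ℝ := Real.log (-Real.log s)

theorem hasDerivAt_logLogBarrier {s : ℝ} (h0 : 0 < s) (h1 : s < 1) :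
    HasDerivAt logLogBarrier (s * Real.log s)⁻¹ s := by
  have hlog : Real.log s < 0 := Real.log_neg h0 h1
  refine ((Real.hasDerivAt_log h0.ne').neg.log (by simpa using hlog.ne)).congr_deriv ?_
  simp only [Pi.neg_apply]
  field_simp

theorem hasSecondDerivAt_logLogBarrier {s : ℝ} (h0 : 0 < s) (h1 : s < 1) :
    HasSecondDerivAt logLogBarrier (fun t => (t * Real.log t)⁻¹)
      (-(Real.log s + 1) / (s * Real.log s) ^ 2) s := by
  have hlog : Real.log s < 0 := Real.log_neg h0 h1
  refine ⟨?_, ?_⟩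
  · filter_upwards [isOpen_Ioo.mem_nhds ⟨h0, h1⟩] with t ht
    exact hasDerivAt_logLogBarrier ht.1 ht.2
  · refine (((hasDerivAt_id' s).mul (Real.hasDerivAt_log h0.ne')).inv
      (mul_neg_of_pos_of_neg h0 hlog).ne).congr_deriv ?_
    simp only [Pi.mul_apply]
    field_simp

/-- With `L = log q`, the left side is affine in `σ`, equal to `1/(qL) < 0` at `σ = 0`
and to `-1/(qL²) < 0` at `σ = q`. -/
theorem logLogBarrier_deriv_combination_neg {q σ : ℝ} (hq0 : 0 < q) (hq1 : q < 1)
    (hσ0 : 0 ≤ σ) (hσq : σ ≤ q) :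
    σ * (-(Real.log q + 1) / (q * Real.log q) ^ 2) + (q * Real.log q)⁻¹ < 0 := by
  have hlog : Real.log q < 0 := Real.log_neg hq0 hq1
  have hqL : q * Real.log q < 0 := mul_neg_of_pos_of_neg hq0 hlog
  have hq : q * (-(Real.log q + 1) / (q * Real.log q) ^ 2) + (q * Real.log q)⁻¹
      = -(q * Real.log q ^ 2)⁻¹ := by
    field_simp
    ring
  have h0 : (q * Real.log q)⁻¹ < 0 := inv_lt_zero.2 hqL
  have hqL2 : -(q * Real.log q ^ 2)⁻¹ < 0 :=
    neg_neg_of_pos (inv_pos.2 (mul_pos hq0 (sq_pos_of_neg hlog)))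
  rcases le_total (-(Real.log q + 1) / (q * Real.log q) ^ 2) 0 with hd | hd
  · nlinarith [mul_nonpos_of_nonneg_of_nonpos hσ0 hd]
  · nlinarith [mul_le_mul_of_nonneg_right hσq hd]

theorem tendsto_logLogBarrier_sq :
    Tendsto (fun ε => logLogBarrier (ε ^ 2)) (𝓝[>] 0) atTop := by
  have hsq : Tendsto (fun ε : ℝ => ε ^ 2) (𝓝[>] 0) (𝓝[>] 0) := by
    refine tendsto_nhdsWithin_of_tendsto_nhds_of_eventually_within _ ?_ ?_
    · simpa using ((continuous_pow 2).tendsto (0 : ℝ)).mono_left nhdsWithin_le_nhds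
    · filter_upwards [self_mem_nhdsWithin] with ε hε
      exact pow_pos (mem_Ioi.1 hε) 2
  exact Real.tendsto_log_atTop.comp
    (tendsto_neg_atBot_atTop.comp (Real.tendsto_log_nhdsGT_zero.comp hsq))

theorem IsLocalMin.second_deriv_line_nonneg {E : Type*} [NormedAddCommGroup E]
    [InnerProductSpace ℝ E] {u : E → ℝ} {ψ ψ' : ℝ → ℝ} {ψ'' : ℝ} {V x : E}
    (hmin : IsLocalMin (fun y => u y + ⟪V, y⟫_ℝ + ψ (‖y‖ ^ 2)) x) (hu : ContDiffAt ℝ 2 u x)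
    (hψ : HasSecondDerivAt ψ ψ' ψ'' (‖x‖ ^ 2)) (e : E) :
    0 ≤ fderiv ℝ (fderiv ℝ u) x e e + ψ'' * (2 * ⟪x, e⟫_ℝ) ^ 2
      + ψ' (‖x‖ ^ 2) * (2 * ‖e‖ ^ 2) := by
  have hψ0 : HasSecondDerivAt ψ ψ' ψ'' (‖x + (0 : ℝ) • e‖ ^ 2) := by
    simpa only [zero_smul, add_zero] using hψ
  have hline := ((hu.hasSecondDerivAt_line e).add (hasSecondDerivAt_inner_line V x e)).add
    (hψ0.comp (f := fun t : ℝ => ‖x + t • e‖ ^ 2) (hasSecondDerivAt_norm_sq_line x e))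
  have hmin_line : IsLocalMin
      (fun t : ℝ => u (x + t • e) + ⟪V, x + t • e⟫_ℝ + ψ (‖x + t • e‖ ^ 2)) 0 :=
    have hmin0 : IsLocalMin (fun y => u y + ⟪V, y⟫_ℝ + ψ (‖y‖ ^ 2)) (x + (0 : ℝ) • e) := by
      simpa using hmin
    hmin0.comp_continuous (g := fun s : ℝ => x + s • e) (hasDerivAt_line x e 0).continuousAt
  convert hmin_line.nonneg_of_hasSecondDerivAt hline using 1
  simp only [zero_smul, add_zero]
  ring

section Hessian

variable {n : ℕ} {u : EuclideanSpace ℝ (Fin n) → ℝ} {x : EuclideanSpace ℝ (Fin n)}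

theorem hessianMatrix_apply (i j : Fin n) :
    hessianMatrix n u x i j =
      fderiv ℝ (fderiv ℝ u) x (EuclideanSpace.single i 1) (EuclideanSpace.single j 1) := by
  rw [hessianMatrix, iteratedFDeriv_two_apply]
  rfl

theorem fderiv_fderiv_apply_eq_dotProduct_hessianMatrix (v w : EuclideanSpace ℝ (Fin n)) :
    fderiv ℝ (fderiv ℝ u) x v w = ⇑v ⬝ᵥ (hessianMatrix n u x *ᵥ ⇑w) := by
  conv_lhs => rw [← (EuclideanSpace.basisFun (Fin n) ℝ).sum_repr v,
    ← (EuclideanSpace.basisFun (Fin n) ℝ).sum_repr w]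
  simp only [map_sum, map_smul, FunLike.coe_sum, FunLike.coe_smul,
    Finset.sum_apply, Pi.smul_apply, smul_eq_mul, EuclideanSpace.basisFun_repr,
    EuclideanSpace.basisFun_apply, Matrix.mulVec, dotProduct, Finset.mul_sum,
    hessianMatrix_apply]
  rw [Finset.sum_comm]
  refine Finset.sum_congr rfl fun i _ => Finset.sum_congr rfl fun j _ => ?_
  ring

theorem isHermitian_hessianMatrix (hu : ContDiffAt ℝ 2 u x) :
    (hessianMatrix n u x).IsHermitian := by
  ext i j
  simpa [hessianMatrix_apply] using
    hu.isSymmSndFDerivAt (by simp) (EuclideanSpace.single j 1) (EuclideanSpace.single i 1)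

theorem eigenvalues_hessianMatrix_eq (hA : (hessianMatrix n u x).IsHermitian) (k : Fin n) :
    hA.eigenvalues k =
      fderiv ℝ (fderiv ℝ u) x (hA.eigenvectorBasis k) (hA.eigenvectorBasis k) := by
  simpa [fderiv_fderiv_apply_eq_dotProduct_hessianMatrix] using hA.eigenvalues_eq k

end Hessian

theorem exists_eigenvalues_add_nonpos {n : ℕ} (hn : 2 ≤ n) {A : Matrix (Fin n) (Fin n) ℝ}
    (hA : A.IsHermitian) (hsum : sumLowEig n 2 A ≤ 0) :
    ∃ i j : Fin n, i ≠ j ∧ hA.eigenvalues i + hA.eigenvalues j ≤ 0 := by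
  have hfil : (Finset.univ.filter fun i : Fin n => (i : ℕ) < 2) =
      {⟨0, by omega⟩, ⟨1, by omega⟩} := by
    ext i
    simp only [Finset.mem_filter, Finset.mem_univ, true_and, Finset.mem_insert,
      Finset.mem_singleton, Fin.ext_iff]
    omega
  rw [sumLowEig, hfil, Finset.sum_pair (by simp [Fin.ext_iff])] at hsum
  simp only [sortedEig, dif_pos hA, Function.comp_apply] at hsum
  exact ⟨_, _, (Tuple.sort hA.eigenvalues).injective.ne (by simp [Fin.ext_iff]), hsum⟩

theorem not_isLocalMin_add_logLogBarrier {n : ℕ} (hn : 2 ≤ n)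
    {u : EuclideanSpace ℝ (Fin n) → ℝ} {x : EuclideanSpace ℝ (Fin n)} (hu : ContDiffAt ℝ 2 u x)
    (hEig : sumLowEig n 2 (hessianMatrix n u x) ≤ 0) (hx0 : 0 < ‖x‖) (hx1 : ‖x‖ < 1)
    (V : EuclideanSpace ℝ (Fin n)) {δ : ℝ} (hδ : 0 < δ) :
    ¬ IsLocalMin (fun y => u y + ⟪V, y⟫_ℝ + δ * logLogBarrier (‖y‖ ^ 2)) x := by
  intro hmin
  set q := ‖x‖ ^ 2
  have hq0 : 0 < q := by positivity
  have hq1 : q < 1 := by nlinarith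
  have hA := isHermitian_hessianMatrix hu
  obtain ⟨i, j, hij, hsum⟩ := exists_eigenvalues_add_nonpos hn hA hEig
  have hsecond : ∀ k, 0 ≤ hA.eigenvalues k
      + δ * (-(Real.log q + 1) / (q * Real.log q) ^ 2)
        * (2 * ⟪x, hA.eigenvectorBasis k⟫_ℝ) ^ 2
      + δ * (q * Real.log q)⁻¹ * 2 := by
    intro k
    have hk := hmin.second_deriv_line_nonneg hu
      ((hasSecondDerivAt_logLogBarrier hq0 hq1).const_mul δ) (hA.eigenvectorBasis k)
    rw [← eigenvalues_hessianMatrix_eq, hA.eigenvectorBasis.orthonormal.1 k] at hk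
    simp only [show ‖x‖ ^ 2 = q from rfl] at hk
    linarith
  have hbessel : ⟪x, hA.eigenvectorBasis i⟫_ℝ ^ 2 + ⟪x, hA.eigenvectorBasis j⟫_ℝ ^ 2 ≤ q := by
    simpa [Finset.sum_pair hij, real_inner_comm] using
      hA.eigenvectorBasis.orthonormal.sum_inner_products_le (s := {i, j}) x
  have hneg := mul_neg_of_pos_of_neg hδ
    (logLogBarrier_deriv_combination_neg hq0 hq1 (by positivity) hbessel)
  nlinarith [hsecond i, hsecond j]

section Comparison

variable {E : Type*} [NormedAddCommGroup E] {w : E → ℝ} {r m : ℝ}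

theorem continuousOn_logLogBarrier_norm_sq :
    ContinuousOn (fun y : E => logLogBarrier (‖y‖ ^ 2)) (ball 0 1 \ {0}) := fun z hz => by
  have hz0 : 0 < ‖z‖ ^ 2 := pow_pos (norm_pos_iff.2 hz.2) 2
  have hz1 : ‖z‖ ^ 2 < 1 := by nlinarith [mem_ball_zero_iff.1 hz.1, norm_nonneg z]
  exact ((hasDerivAt_logLogBarrier hz0 hz1).continuousAt.comp (f := fun z : E => ‖z‖ ^ 2)
    (by fun_prop)).continuousWithinAt

theorem bddBelow_image_add_inner [InnerProductSpace ℝ E] {u : E → ℝ} {s : Set E} {R : ℝ}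
    (hu : BddBelow (u '' s)) (hs : s ⊆ closedBall 0 R) (V : E) :
    BddBelow ((fun x => u x + ⟪V, x⟫_ℝ) '' s) := by
  obtain ⟨c, hc⟩ := hu
  refine ⟨c - ‖V‖ * R, forall_mem_image.2 fun x hx => ?_⟩
  have hVx : |⟪V, x⟫_ℝ| ≤ ‖V‖ * R := (abs_real_inner_le_norm V x).trans
    (mul_le_mul_of_nonneg_left (mem_closedBall_zero_iff.1 (hs hx)) (norm_nonneg V))
  linarith [hc (mem_image_of_mem u hx), neg_abs_le ⟪V, x⟫_ℝ]

theorem add_logLogBarrier_le_of_forall_not_isLocalMin [ProperSpace E] {δ : ℝ} (hr1 : r < 1)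
    (hδ : 0 < δ) (hw : ContinuousOn w (ball 0 1 \ {0}))
    (hbdd : BddBelow (w '' (ball 0 1 \ {0})))
    (hm : ∀ z ∈ sphere (0 : E) r, m ≤ w z)
    (hmin : ∀ x : E, 0 < ‖x‖ → ‖x‖ < r →
      ¬ IsLocalMin (fun y => w y + δ * logLogBarrier (‖y‖ ^ 2)) x)
    {y : E} (hy : y ∈ ball (0 : E) r \ {0}) :
    m + δ * logLogBarrier (r ^ 2) ≤ w y + δ * logLogBarrier (‖y‖ ^ 2) := by
  set v := fun y => w y + δ * logLogBarrier (‖y‖ ^ 2)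
  obtain ⟨c, hc⟩ := hbdd
  have hy0 : 0 < ‖y‖ := norm_pos_iff.2 hy.2
  have hyr : ‖y‖ < r := mem_ball_zero_iff.1 hy.1
  obtain ⟨ε, hεT, hε0, hεy⟩ := ((tendsto_logLogBarrier_sq.eventually_gt_atTop
    ((v y - c) / δ)).and (Ioo_mem_nhdsGT hy0)).exists
  set K := closedBall (0 : E) r \ ball 0 ε
  have hKD : K ⊆ ball 0 1 \ {0} := fun z hz =>
    ⟨mem_ball_zero_iff.2 ((mem_closedBall_zero_iff.1 hz.1).trans_lt hr1),
    fun h => hz.2 (by simp [show z = 0 from h, hε0])⟩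
  have hyK : y ∈ K := ⟨ball_subset_closedBall hy.1, by simpa using hεy.le⟩
  have hv : ContinuousOn v K :=
    (hw.add (continuousOn_const.mul continuousOn_logLogBarrier_norm_sq)).mono hKD
  obtain ⟨x₀, hx₀K, hx₀min⟩ :=
    ((isCompact_closedBall 0 r).diff isOpen_ball).exists_isMinOn ⟨y, hyK⟩ hv
  have hx₀r : ‖x₀‖ ≤ r := mem_closedBall_zero_iff.1 hx₀K.1
  have hx₀ε : ε ≤ ‖x₀‖ := by simpa using hx₀K.2
  rcases hx₀r.lt_or_eq with hx₀r | hx₀r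
  · exfalso
    rcases hx₀ε.lt_or_eq with hx₀ε | hx₀ε
    · refine hmin x₀ (hε0.trans hx₀ε) hx₀r (hx₀min.isLocalMin ?_)
      refine Filter.mem_of_superset ((isOpen_ball.sdiff isClosed_closedBall).mem_nhds
        (⟨mem_ball_zero_iff.2 hx₀r, by simpa using hx₀ε⟩ : x₀ ∈ ball 0 r \ closedBall 0 ε)) ?_
      exact fun z hz => ⟨ball_subset_closedBall hz.1, fun h => hz.2 (ball_subset_closedBall h)⟩
    · have h1 : c ≤ w x₀ := hc (mem_image_of_mem w (hKD hx₀K))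
      have h2 : v y - c < δ * logLogBarrier (‖x₀‖ ^ 2) := by
        rw [← hx₀ε]; exact (div_lt_iff₀' hδ).1 hεT
      have h3 : v x₀ ≤ v y := hx₀min hyK
      simp only [v] at h2 h3
      linarith
  · have h1 : m ≤ w x₀ := hm x₀ (mem_sphere_zero_iff_norm.2 hx₀r)
    have h2 : v x₀ ≤ v y := hx₀min hyK
    simp only [v, hx₀r] at h2
    linarith

theorem le_of_forall_not_isLocalMin_add_logLogBarrier [ProperSpace E] (hr1 : r < 1)
    (hw : ContinuousOn w (ball 0 1 \ {0})) (hbdd : BddBelow (w '' (ball 0 1 \ {0})))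
    (hm : ∀ z ∈ sphere (0 : E) r, m ≤ w z)
    (hmin : ∀ δ > 0, ∀ x : E, 0 < ‖x‖ → ‖x‖ < r →
      ¬ IsLocalMin (fun y => w y + δ * logLogBarrier (‖y‖ ^ 2)) x)
    {y : E} (hy : y ∈ ball (0 : E) r \ {0}) : m ≤ w y := by
  set a := logLogBarrier (‖y‖ ^ 2) - logLogBarrier (r ^ 2)
  have hlim : Tendsto (fun δ => w y + δ * a) (𝓝[>] 0) (𝓝 (w y)) := by
    have hcont : Continuous fun δ : ℝ => w y + δ * a := by fun_prop
    simpa using (hcont.tendsto 0).mono_left nhdsWithin_le_nhds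
  refine ge_of_tendsto hlim (eventually_nhdsWithin_of_forall fun δ (hδ : 0 < δ) => ?_)
  have := add_logLogBarrier_le_of_forall_not_isLocalMin hr1 hδ hw hbdd hm (hmin δ hδ) hy
  linarith

theorem isLeast_image_sphere_sInf_image_ball [NormedSpace ℝ E] [Nontrivial E] (hr : 0 < r)
    {xs : E} (hxs : xs ∈ sphere (0 : E) r) (hsphere : IsMinOn w (sphere 0 r) xs)
    (hball : ∀ y ∈ ball (0 : E) r \ {0}, w xs ≤ w y)
    (hw : ContinuousWithinAt w (ball 0 r \ {0}) xs) :
    IsLeast (w '' sphere (0 : E) r) (sInf (w '' (ball (0 : E) r \ {0}))) := by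
  have hcl : xs ∈ closure (ball (0 : E) r \ {0}) := by
    have hdense : ball (0 : E) r ⊆ closure (ball 0 r ∩ {0}ᶜ) :=
      (dense_compl_singleton (0 : E)).open_subset_closure_inter isOpen_ball
    exact closure_minimal hdense isClosed_closure
      ((closure_ball (0 : E) hr.ne').symm ▸ sphere_subset_closedBall hxs)
  have hglb : IsGLB (w '' (ball (0 : E) r \ {0})) (w xs) :=
    isGLB_of_mem_closure (forall_mem_image.2 hball) (hw.mem_closure_image hcl)
  rw [hglb.csInf_eq ((closure_nonempty_iff.1 ⟨xs, hcl⟩).image w)]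
  exact ⟨mem_image_of_mem w hxs, forall_mem_image.2 fun y hy => hsphere hy⟩

end Comparison

/-- Lemma 1.1: if `λ₁(∇²u) + λ₂(∇²u) ≤ 0` on the punctured unit ball
and `u` is bounded below there, then `u` satisfies condition (★) with radius `1`. -/
theorem stmt_1 (n : ℕ) (hn : 2 ≤ n) (u : EuclideanSpace ℝ (Fin n) → ℝ)
    (hu : ContDiffOn ℝ 2 u (ball (0 : EuclideanSpace ℝ (Fin n)) 1 \ {0}))
    (hEig : ∀ x ∈ ball (0 : EuclideanSpace ℝ (Fin n)) 1 \ {0},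
      sumLowEig n 2 (hessianMatrix n u x) ≤ 0)
    (hbdd : BddBelow (u '' (ball (0 : EuclideanSpace ℝ (Fin n)) 1 \ {0}))) :
    StarCond n u 1 := by
  intro V r hr hr1
  have : NeZero n := ⟨by omega⟩
  set D := ball (0 : EuclideanSpace ℝ (Fin n)) 1 \ {0}
  set w := fun x => u x + ⟪V, x⟫_ℝ
  have hC2 : ∀ x ∈ D, ContDiffAt ℝ 2 u x := fun x hx =>
    hu.contDiffAt ((isOpen_ball.sdiff isClosed_singleton).mem_nhds hx)
  have hw : ContinuousOn w D := fun x hx =>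
    ((hC2 x hx).continuousAt.add (by fun_prop)).continuousWithinAt
  have hwbdd : BddBelow (w '' D) :=
    bddBelow_image_add_inner hbdd (sdiff_subset.trans ball_subset_closedBall) V
  have hsphere : sphere 0 r ⊆ D := fun x hx =>
    ⟨sphere_subset_ball hr1 hx, ne_zero_of_mem_sphere hr.ne' ⟨x, hx⟩⟩
  have hball : ball 0 r \ {0} ⊆ D := sdiff_subset_sdiff_left (ball_subset_ball hr1.le)
  obtain ⟨xs, hxs, hxs_min⟩ := (isCompact_sphere 0 r).exists_isMinOn
    (NormedSpace.sphere_nonempty.2 hr.le) (hw.mono hsphere)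
  have hxD : ∀ x, 0 < ‖x‖ → ‖x‖ < r → x ∈ D := fun x hx0 hxr =>
    ⟨mem_ball_zero_iff.2 (hxr.trans hr1), norm_pos_iff.1 hx0⟩
  refine isLeast_image_sphere_sInf_image_ball hr hxs hxs_min (fun y hy => ?_)
    ((hw xs (hsphere hxs)).mono hball)
  exact le_of_forall_not_isLocalMin_add_logLogBarrier hr1 hw hwbdd (fun z hz => hxs_min hz)
    (fun δ hδ x hx0 hxr => not_isLocalMin_add_logLogBarrier hn (hC2 x (hxD x hx0 hxr))
      (hEig x (hxD x hx0 hxr)) hx0 (hxr.trans hr1) V hδ) hy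
end
end

section
/- Let n ≥ 2 and let u : B₁ ∖ {0} → ℝ satisfy liminf_{x → 0} u(x) = 0 and condition (★) with radius r̄ = 1. Let P denote the set of vectors p ∈ ℝⁿ such that u(x) ≥ p·x + o(|x|) as x → 0. Then there do not exist n+1 vectors p₀, p₁, …, pₙ ∈ P such that p₁ − p₀, …, pₙ − p₀ are linearly independent; equivalently, the convex hull of P has dimension at most n−1. -/
/-!
If `p₀, …, pₙ ∈ P` were affinely independent, tilt by minus their centroid `a`: the slopes
`qᵢ = pᵢ - a` sum to zero and no nonzero `x` is orthogonal to all of them, so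
`maxᵢ ⟪qᵢ, x⟫ > 0` for `x ≠ 0`, and by homogeneity and compactness of the unit sphere
`maxᵢ ⟪qᵢ, x⟫ ≥ c‖x‖`. Hence `w = u - ⟪a, ·⟫` satisfies `w x ≥ c‖x‖ / 2` near `0`.
Condition (★) bounds `w` on a small punctured ball `B_r` from below by its minimum on `∂B_r`,
which is at least `c r / 2 > 0`; since `⟪a, x⟫ → 0`, this contradicts `liminf_{x → 0} u = 0`.
-/

open Filter Metric Set MeasureTheory Topology

attribute [local instance] Matrix.normedAddCommGroup Matrix.normedSpace

noncomputable section

open RealInnerProductSpace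

section InnerProductSpace

variable {E : Type*} [NormedAddCommGroup E] [InnerProductSpace ℝ E] {ι : Type*} [Fintype ι]

theorem sum_sub_centroid_eq_zero [Nonempty ι] (p : ι → E) :
    ∑ i, (p i - (Fintype.card ι : ℝ)⁻¹ • ∑ j, p j) = 0 := by
  have hcard : (Fintype.card ι : ℝ) ≠ 0 := Nat.cast_ne_zero.2 Fintype.card_ne_zero
  rw [Finset.sum_sub_distrib, Finset.sum_const, Finset.card_univ, ← Nat.cast_smul_eq_nsmul ℝ,
    smul_smul, mul_inv_cancel₀ hcard, one_smul, sub_self]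

theorem LinearIndependent.eq_zero_of_forall_inner_eq_zero [FiniteDimensional ℝ E] {b : ι → E}
    (hb : LinearIndependent ℝ b) (hcard : Fintype.card ι = Module.finrank ℝ E) {x : E}
    (hx : ∀ i, ⟪b i, x⟫ = 0) : x = 0 :=
  InnerProductSpace.ext_inner_left_basis (basisOfLinearIndependentOfCardEqFinrank' b hb hcard)
    fun i => by simpa using hx i

theorem exists_inner_pos_of_sum_eq_zero {q : ι → E} (hsum : ∑ i, q i = 0)
    (hspan : ∀ x, (∀ i, ⟪q i, x⟫ = 0) → x = 0) {x : E} (hx : x ≠ 0) :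
    ∃ i, 0 < ⟪q i, x⟫ := by
  by_contra! hle
  have hzero : ∑ i, ⟪q i, x⟫ = 0 := by rw [← sum_inner, hsum, inner_zero_left]
  exact hx <| hspan x fun i =>
    (Finset.sum_eq_zero_iff_of_nonpos fun i _ => hle i).1 hzero i (Finset.mem_univ i)

theorem exists_pos_mul_norm_le_inner [FiniteDimensional ℝ E] [Nonempty ι] {q : ι → E}
    (hpos : ∀ x ≠ 0, ∃ i, 0 < ⟪q i, x⟫) :
    ∃ c > 0, ∀ x : E, ∃ i, c * ‖x‖ ≤ ⟪q i, x⟫ := by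
  let F : E → ℝ := fun x => Finset.univ.sup' Finset.univ_nonempty fun i => ⟪q i, x⟫
  have hF : Continuous F :=
    Continuous.finset_sup'_apply _ fun i _ => continuous_const.inner continuous_id
  have hFpos : ∀ y ∈ sphere (0 : E) 1, 0 < F y := fun y hy => by
    obtain ⟨i, hi⟩ := hpos y (ne_zero_of_mem_unit_sphere ⟨y, hy⟩)
    exact Finset.lt_sup'_iff _ |>.2 ⟨i, Finset.mem_univ i, hi⟩
  obtain ⟨c, hc, hcF⟩ := (isCompact_sphere (0 : E) 1).exists_forall_le' hF.continuousOn hFpos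
  refine ⟨c, hc, fun x => ?_⟩
  rcases eq_or_ne x 0 with rfl | hx
  · exact ⟨Classical.arbitrary ι, by simp⟩
  have hnorm : 0 < ‖x‖ := norm_pos_iff.2 hx
  obtain ⟨i, -, hi⟩ := Finset.le_sup'_iff _ |>.1 <| hcF (‖x‖⁻¹ • x) <| by
    simp [norm_smul, hnorm.ne']
  refine ⟨i, ?_⟩
  rwa [inner_smul_right, ← div_eq_inv_mul, le_div_iff₀ hnorm] at hi

end InnerProductSpace

theorem eventually_nhdsNE_zero_of_forall_norm_lt {F : Type*} [SeminormedAddCommGroup F]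
    {P : F → Prop} {ρ : ℝ} (hρ : 0 < ρ) (h : ∀ x, x ≠ 0 → ‖x‖ < ρ → P x) :
    ∀ᶠ x in 𝓝[≠] 0, P x :=
  eventually_nhdsWithin_iff.2 <| Metric.eventually_nhds_iff.2
    ⟨ρ, hρ, fun x hx hx0 => h x hx0 (by simpa using hx)⟩

theorem StarCond.exists_mem_sphere_le {n : ℕ} {u : EuclideanSpace ℝ (Fin n) → ℝ}
    {rbar : ℝ} (hstar : StarCond n u rbar) (V : EuclideanSpace ℝ (Fin n)) {r : ℝ} (hr : 0 < r)
    (hrbar : r < rbar) (hbdd : BddBelow ((fun x => u x + ⟪V, x⟫) '' (ball 0 r \ {0})))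
    {y : EuclideanSpace ℝ (Fin n)} (hy : y ∈ ball 0 r \ {0}) :
    ∃ z ∈ sphere 0 r, u z + ⟪V, z⟫ ≤ u y + ⟪V, y⟫ := by
  obtain ⟨⟨z, hz, hzinf⟩, -⟩ := hstar V r hr hrbar
  exact ⟨z, hz, hzinf.trans_le (csInf_le hbdd ⟨y, hy, rfl⟩)⟩

theorem StarCond.exists_pos_eventually_le {n : ℕ} {u : EuclideanSpace ℝ (Fin n) → ℝ}
    {rbar : ℝ} (hstar : StarCond n u rbar) (hrbar : 0 < rbar) (V : EuclideanSpace ℝ (Fin n))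
    {k : ℝ} (hk : 0 < k) (hlow : ∀ᶠ x in 𝓝[≠] 0, k * ‖x‖ ≤ u x + ⟪V, x⟫) :
    ∃ m > 0, ∀ᶠ x in 𝓝[≠] 0, m ≤ u x + ⟪V, x⟫ := by
  obtain ⟨ρ, hρ, hρlow⟩ := Metric.eventually_nhds_iff.1 (eventually_nhdsWithin_iff.1 hlow)
  obtain ⟨r, hr, hrρ, hrbar⟩ : ∃ r, 0 < r ∧ r < ρ ∧ r < rbar :=
    ⟨min ρ rbar / 2, by positivity, by linarith [min_le_left ρ rbar],
      by linarith [min_le_right ρ rbar]⟩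
  have hlow_r : ∀ x ∈ closedBall (0 : EuclideanSpace ℝ (Fin n)) r, x ≠ 0 →
      k * ‖x‖ ≤ u x + ⟪V, x⟫ := fun x hx hx0 =>
    hρlow (by simpa using (mem_closedBall_zero_iff.1 hx).trans_lt hrρ) hx0
  have hbdd : BddBelow ((fun x => u x + ⟪V, x⟫) '' (ball 0 r \ {0})) := by
    refine ⟨0, ?_⟩
    rintro _ ⟨x, ⟨hx, hx0⟩, rfl⟩
    exact (mul_nonneg hk.le (norm_nonneg x)).trans (hlow_r x (ball_subset_closedBall hx) hx0)
  refine ⟨k * r, by positivity, ?_⟩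
  filter_upwards [eventually_nhdsWithin_of_eventually_nhds (ball_mem_nhds 0 hr),
    self_mem_nhdsWithin] with y hyr hy0
  obtain ⟨z, hz, hzy⟩ := hstar.exists_mem_sphere_le V hr hrbar hbdd ⟨hyr, hy0⟩
  have hz0 : z ≠ 0 := ne_of_mem_sphere hz hr.ne'
  have := hlow_r z (sphere_subset_closedBall hz) hz0
  rw [mem_sphere_zero_iff_norm.1 hz] at this
  linarith

theorem stmt_9_general (n : ℕ) (u : EuclideanSpace ℝ (Fin n) → ℝ)
    (hlim2 : ∀ ε : ℝ, 0 < ε → ∃ᶠ x in 𝓝[≠] (0 : EuclideanSpace ℝ (Fin n)), u x < ε)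
    (hstar : StarCond n u 1) :
    ¬ ∃ p : Fin (n + 1) → EuclideanSpace ℝ (Fin n),
        (∀ i : Fin (n + 1), ∀ δ : ℝ, 0 < δ → ∃ ρ : ℝ, 0 < ρ ∧
          ∀ x : EuclideanSpace ℝ (Fin n), x ≠ 0 → ‖x‖ < ρ →
            (inner ℝ (p i) x : ℝ) - δ * ‖x‖ ≤ u x) ∧
        LinearIndependent ℝ (fun i : Fin n => p i.succ - p 0) := by
  rintro ⟨p, hp, hli⟩
  set a := (Fintype.card (Fin (n + 1)) : ℝ)⁻¹ • ∑ j, p j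
  have hspan : ∀ x, (∀ i, ⟪p i - a, x⟫ = 0) → x = 0 := fun x hx =>
    hli.eq_zero_of_forall_inner_eq_zero (by simp) fun i => by
      rw [← sub_sub_sub_cancel_right _ _ a, inner_sub_left, hx, hx, sub_zero]
  obtain ⟨c, hc, hcx⟩ := exists_pos_mul_norm_le_inner fun x hx =>
    exists_inner_pos_of_sum_eq_zero (sum_sub_centroid_eq_zero p) hspan hx
  have hlow : ∀ᶠ x in 𝓝[≠] 0, c / 2 * ‖x‖ ≤ u x + ⟪-a, x⟫ := by
    have hslope i : ∀ᶠ x in 𝓝[≠] 0, ⟪p i, x⟫ - c / 2 * ‖x‖ ≤ u x :=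
      let ⟨_, hρ, hρx⟩ := hp i (c / 2) (half_pos hc)
      eventually_nhdsNE_zero_of_forall_norm_lt hρ hρx
    filter_upwards [eventually_all.2 hslope] with x hx
    obtain ⟨i, hi⟩ := hcx x
    rw [inner_sub_left] at hi
    rw [inner_neg_left]
    linarith [hx i]
  obtain ⟨m, hm, hmw⟩ := hstar.exists_pos_eventually_le one_pos (-a) (half_pos hc) hlow
  have htilt : ∀ᶠ x in 𝓝[≠] (0 : EuclideanSpace ℝ (Fin n)), ⟪-a, x⟫ < m / 2 := by
    have hcont : Continuous fun x : EuclideanSpace ℝ (Fin n) => ⟪-a, x⟫ :=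
      continuous_const.inner continuous_id
    refine eventually_nhdsWithin_of_eventually_nhds <|
      (hcont.tendsto' 0 0 (inner_zero_right _)).eventually (gt_mem_nhds (half_pos hm))
  obtain ⟨x, hux, hmx, hax⟩ :=
    ((hlim2 (m / 2) (half_pos hm)).and_eventually (hmw.and htilt)).exists
  linarith

/-- Lemma 1.2: for a function satisfying condition (★) on the punctured
unit ball with `liminf_{x→0} u = 0`, the set `P` of lower supporting slopes at `0` contains
no `n + 1` affinely independent vectors. -/
theorem stmt_9 (n : ℕ) (hn : 2 ≤ n) (u : EuclideanSpace ℝ (Fin n) → ℝ)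
    (hlim1 : ∀ ε : ℝ, 0 < ε → ∀ᶠ x in 𝓝[≠] (0 : EuclideanSpace ℝ (Fin n)), -ε < u x)
    (hlim2 : ∀ ε : ℝ, 0 < ε → ∃ᶠ x in 𝓝[≠] (0 : EuclideanSpace ℝ (Fin n)), u x < ε)
    (hstar : StarCond n u 1) :
    ¬ ∃ p : Fin (n + 1) → EuclideanSpace ℝ (Fin n),
        (∀ i : Fin (n + 1), ∀ δ : ℝ, 0 < δ → ∃ ρ : ℝ, 0 < ρ ∧
          ∀ x : EuclideanSpace ℝ (Fin n), x ≠ 0 → ‖x‖ < ρ →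
            (inner ℝ (p i) x : ℝ) - δ * ‖x‖ ≤ u x) ∧
        LinearIndependent ℝ (fun i : Fin n => p i.succ - p 0) :=
  stmt_9_general n u hlim2 hstar
end
end

section
/- Let n ≥ 2, let 1 ≤ k < l ≤ n, let δ₁, …, δ_k be real numbers with 0 < δᵢ ≤ (l−k)/k for each 1 ≤ i ≤ k, and let M be an n×n real symmetric matrix. Let D = diag(1, …, 1, −δ₁, …, −δ_k) be the diagonal matrix whose first n−k diagonal entries equal 1 and whose last k diagonal entries are −δ₁, …, −δ_k. Then λ₁(M−D) + ⋯ + λ_l(M−D) ≤ λ₁(M) + ⋯ + λ_l(M). -/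
open Filter Metric Set MeasureTheory Topology

attribute [local instance] Matrix.normedAddCommGroup Matrix.normedSpace

noncomputable section

/-! Ky Fan's principle: `λ₁(A) + ⋯ + λ_l(A)` is the minimum of `tr(Vᵀ A V)` over `n × l` matrices
`V` with orthonormal columns. Evaluating it at an orthonormal frame `V` of eigenvectors of `M` for
its `l` smallest eigenvalues, it suffices that `tr(Vᵀ D V) = ∑ⱼ Dⱼⱼ Pⱼⱼ ≥ 0`, where `P = V Vᵀ`.
The diagonal of the projection `P` lies in `[0, 1]` and sums to `l`, so the last `k` entries carry
total weight `w ≤ k`, the first `n - k` entries weight `l - w`, and the negative part is at least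
`-((l - k)/k) w`; since `(1 + (l - k)/k) w ≤ l`, the sum is nonnegative. -/

open Finset Matrix

theorem Finset.sum_le_sum_mul_of_threshold {ι : Type*} [Fintype ι] (F : Finset ι)
    {μ s : ι → ℝ} (c : ℝ) (hs0 : ∀ i, 0 ≤ s i) (hs1 : ∀ i, s i ≤ 1) (hsum : ∑ i, s i = #F)
    (hμF : ∀ i ∈ F, μ i ≤ c) (hμFc : ∀ i ∉ F, c ≤ μ i) :
    ∑ i ∈ F, μ i ≤ ∑ i, μ i * s i := by
  classical
  -- termwise `μ i (𝟙_F i - s i) ≤ c (𝟙_F i - s i)`, and the right-hand sides sum to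
  -- `c (#F - ∑ s) = 0`
  have key : ∀ i ∈ (univ : Finset ι),
      μ i * ((if i ∈ F then 1 else 0) - s i) ≤ c * ((if i ∈ F then 1 else 0) - s i) := by
    intro i _
    split_ifs with hi
    · exact mul_le_mul_of_nonneg_right (hμF i hi) (by linarith [hs1 i])
    · nlinarith [hμFc i hi, hs0 i]
  have := Finset.sum_le_sum key
  simp only [mul_sub, mul_ite, mul_one, mul_zero, Finset.sum_sub_distrib, Finset.sum_ite_mem,
    Finset.univ_inter, ← Finset.mul_sum, hsum, Finset.sum_const, nsmul_eq_mul] at this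
  linarith

theorem Finset.sum_mul_nonneg_of_eq_one_of_notMem {ι : Type*} [Fintype ι] (s : Finset ι)
    {d t : ι → ℝ} {C : ℝ} (hC : 0 ≤ C) (ht0 : ∀ i, 0 ≤ t i) (ht1 : ∀ i, t i ≤ 1)
    (hd : ∀ i ∉ s, d i = 1) (hds : ∀ i ∈ s, -C ≤ d i) (hCs : (1 + C) * #s ≤ ∑ i, t i) :
    0 ≤ ∑ i, d i * t i := by
  classical
  have hts : ∑ i ∈ s, t i ≤ #s := by
    simpa using Finset.sum_le_sum fun i (_ : i ∈ s) => ht1 i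
  have hon : -C * ∑ i ∈ s, t i ≤ ∑ i ∈ s, d i * t i := by
    rw [Finset.mul_sum]
    exact Finset.sum_le_sum fun i hi => mul_le_mul_of_nonneg_right (hds i hi) (ht0 i)
  have hoff : ∑ i ∈ sᶜ, d i * t i = ∑ i ∈ sᶜ, t i := by
    refine Finset.sum_congr rfl fun i hi => ?_
    rw [hd i (Finset.mem_compl.mp hi), one_mul]
  rw [← Finset.sum_add_sum_compl s, hoff]
  rw [← Finset.sum_add_sum_compl s] at hCs
  have := mul_le_mul_of_nonneg_left hts hC
  linarith

namespace Matrix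

variable {ι κ : Type*} [Fintype κ]

theorem diag_mul_transpose_self_nonneg (W : Matrix ι κ ℝ) (j : ι) : 0 ≤ (W * Wᵀ) j j :=
  Finset.sum_nonneg fun i _ => mul_self_nonneg (W j i)

theorem diag_mul_transpose_self_le_one [Fintype ι] [DecidableEq κ] {W : Matrix ι κ ℝ}
    (hW : Wᵀ * W = 1) (j : ι) :
    (W * Wᵀ) j j ≤ 1 := by
  set P := W * Wᵀ
  have hidem : P * P = P := by
    rw [Matrix.mul_assoc, ← Matrix.mul_assoc Wᵀ, hW, Matrix.one_mul]
  have hsymm : ∀ c, P c j = P j c := fun c => by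
    simp only [P, Matrix.mul_apply, Matrix.transpose_apply, mul_comm]
  have hsq : P j j ^ 2 ≤ P j j :=
    calc P j j ^ 2 ≤ ∑ c, P j c ^ 2 :=
          Finset.single_le_sum (f := fun c => P j c ^ 2) (fun c _ => sq_nonneg _)
            (Finset.mem_univ j)
      _ = (P * P) j j := by simp only [Matrix.mul_apply, hsymm, sq]
      _ = P j j := by rw [hidem]
  nlinarith [diag_mul_transpose_self_nonneg W j]

theorem trace_mul_transpose_self [Fintype ι] [DecidableEq κ] {W : Matrix ι κ ℝ}
    (hW : Wᵀ * W = 1) :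
    (W * Wᵀ).trace = Fintype.card κ := by
  rw [Matrix.trace_mul_comm, hW, Matrix.trace_one]

theorem trace_transpose_mul_diagonal_mul [Fintype ι] [DecidableEq ι] (W : Matrix ι κ ℝ)
    (d : ι → ℝ) :
    (Wᵀ * diagonal d * W).trace = ∑ j, d j * (W * Wᵀ) j j := by
  rw [Matrix.trace_mul_comm, ← Matrix.mul_assoc, Matrix.trace]
  simp only [Matrix.diag_apply, Matrix.mul_diagonal, mul_comm]

theorem trace_transpose_mul_diagonal_mul_nonneg [Fintype ι] [DecidableEq ι] [DecidableEq κ]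
    {V : Matrix ι κ ℝ} (hV : Vᵀ * V = 1) (s : Finset ι)
    {d : ι → ℝ} {C : ℝ} (hC : 0 ≤ C) (hd : ∀ i ∉ s, d i = 1) (hds : ∀ i ∈ s, -C ≤ d i)
    (hCs : (1 + C) * #s ≤ Fintype.card κ) :
    0 ≤ (Vᵀ * diagonal d * V).trace := by
  rw [trace_transpose_mul_diagonal_mul]
  refine Finset.sum_mul_nonneg_of_eq_one_of_notMem s hC (diag_mul_transpose_self_nonneg V)
    (diag_mul_transpose_self_le_one hV) hd hds ?_
  exact hCs.trans_eq (trace_mul_transpose_self hV).symm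

end Matrix

theorem Fin.sum_filter_val_lt_eq_sum_castLE {M : Type*} [AddCommMonoid M] {n l : ℕ}
    (hln : l ≤ n) (f : Fin n → M) :
    ∑ j ∈ univ.filter (fun j : Fin n => (j : ℕ) < l), f j =
      ∑ i : Fin l, f (Fin.castLE hln i) := by
  have hF : univ.filter (fun j : Fin n => (j : ℕ) < l) = univ.map (Fin.castLEEmb hln) := by
    ext j
    simpa using ⟨fun hj => ⟨⟨j, hj⟩, rfl⟩, by rintro ⟨i, rfl⟩; exact i.isLt⟩
  rw [hF, Finset.sum_map]
  rfl

namespace Matrix.IsHermitian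

variable {ι : Type*} [Fintype ι] [DecidableEq ι] {A : Matrix ι ι ℝ} (hA : A.IsHermitian)

theorem star_eigenvectorUnitary_eq_transpose :
    star (hA.eigenvectorUnitary : Matrix ι ι ℝ) = (hA.eigenvectorUnitary : Matrix ι ι ℝ)ᵀ := by
  rw [Matrix.star_eq_conjTranspose, Matrix.conjTranspose_eq_transpose_of_trivial]

theorem transpose_eigenvectorUnitary_mul_self :
    (hA.eigenvectorUnitary : Matrix ι ι ℝ)ᵀ * hA.eigenvectorUnitary = 1 := by
  rw [← star_eigenvectorUnitary_eq_transpose]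
  exact Unitary.coe_star_mul_self _

theorem eigenvectorUnitary_mul_transpose_self :
    (hA.eigenvectorUnitary : Matrix ι ι ℝ) * (hA.eigenvectorUnitary : Matrix ι ι ℝ)ᵀ = 1 := by
  rw [← star_eigenvectorUnitary_eq_transpose]
  exact Unitary.coe_mul_star_self _

theorem transpose_eigenvectorUnitary_mul_mul_eigenvectorUnitary :
    (hA.eigenvectorUnitary : Matrix ι ι ℝ)ᵀ * A * hA.eigenvectorUnitary =
      diagonal hA.eigenvalues := by
  have := hA.conjStarAlgAut_star_eigenvectorUnitary
  rw [Unitary.conjStarAlgAut_star_apply, RCLike.ofReal_real_eq_id, Function.id_comp] at this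
  rwa [← star_eigenvectorUnitary_eq_transpose]

end Matrix.IsHermitian

theorem sumLowEig_eq_sum_sort {n : ℕ} (l : ℕ) {A : Matrix (Fin n) (Fin n) ℝ}
    (hA : A.IsHermitian) :
    sumLowEig n l A = ∑ j ∈ univ.filter (fun j : Fin n => (j : ℕ) < l),
      hA.eigenvalues (Tuple.sort hA.eigenvalues j) := by
  rw [sumLowEig, sortedEig, dif_pos hA]
  rfl

theorem sumLowEig_le_trace {n l : ℕ} (hl : 0 < l) (hln : l ≤ n) {A : Matrix (Fin n) (Fin n) ℝ}
    (hA : A.IsHermitian) {V : Matrix (Fin n) (Fin l) ℝ} (hV : Vᵀ * V = 1) :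
    sumLowEig n l A ≤ (Vᵀ * A * V).trace := by
  set U : Matrix (Fin n) (Fin n) ℝ := ↑hA.eigenvectorUnitary
  set σ := Tuple.sort hA.eigenvalues
  set W := Uᵀ * V
  have hW : Wᵀ * W = 1 := by
    rw [transpose_mul, transpose_transpose, Matrix.mul_assoc, ← Matrix.mul_assoc U,
      hA.eigenvectorUnitary_mul_transpose_self, Matrix.one_mul, hV]
  have hVAV : Vᵀ * A * V = Wᵀ * diagonal hA.eigenvalues * W :=
    calc Vᵀ * A * V = Vᵀ * (U * Uᵀ) * A * (U * Uᵀ) * V := by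
          rw [hA.eigenvectorUnitary_mul_transpose_self, Matrix.mul_one, Matrix.mul_one]
      _ = (Uᵀ * V)ᵀ * (Uᵀ * A * U) * (Uᵀ * V) := by
          simp only [transpose_mul, transpose_transpose, Matrix.mul_assoc]
      _ = Wᵀ * diagonal hA.eigenvalues * W := by
          rw [hA.transpose_eigenvectorUnitary_mul_mul_eigenvectorUnitary]
  set F := univ.filter (fun j : Fin n => (j : ℕ) < l)
  have hF : (#F : ℝ) = l := by simp [F, Fin.card_filter_val_lt, hln]
  rw [hVAV, trace_transpose_mul_diagonal_mul, sumLowEig_eq_sum_sort l hA,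
    ← Equiv.sum_comp σ (fun j => hA.eigenvalues j * (W * Wᵀ) j j)]
  refine Finset.sum_le_sum_mul_of_threshold F (hA.eigenvalues (σ ⟨l - 1, by omega⟩))
    (fun j => diag_mul_transpose_self_nonneg W _) (fun j => diag_mul_transpose_self_le_one hW _)
    ?_ ?_ ?_
  · rw [Equiv.sum_comp σ (fun j => (W * Wᵀ) j j), hF]
    exact (trace_mul_transpose_self hW).trans (by rw [Fintype.card_fin])
  · intro j hj
    refine Tuple.monotone_sort hA.eigenvalues (show (j : ℕ) ≤ l - 1 from ?_)
    simp only [F, Finset.mem_filter, Finset.mem_univ, true_and] at hj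
    omega
  · intro j hj
    refine Tuple.monotone_sort hA.eigenvalues (show l - 1 ≤ (j : ℕ) from ?_)
    simp only [F, Finset.mem_filter, Finset.mem_univ, true_and] at hj
    omega

theorem exists_transpose_mul_self_eq_one_trace_eq_sumLowEig {n l : ℕ} (hln : l ≤ n)
    {A : Matrix (Fin n) (Fin n) ℝ} (hA : A.IsHermitian) :
    ∃ V : Matrix (Fin n) (Fin l) ℝ, Vᵀ * V = 1 ∧ (Vᵀ * A * V).trace = sumLowEig n l A := by
  set U : Matrix (Fin n) (Fin n) ℝ := ↑hA.eigenvectorUnitary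
  set σ := Tuple.sort hA.eigenvalues
  let e : Fin l ↪ Fin n := (Fin.castLEEmb hln).trans σ.toEmbedding
  have hconj : ∀ B : Matrix (Fin n) (Fin n) ℝ,
      (U.submatrix id e)ᵀ * B * U.submatrix id e = (Uᵀ * B * U).submatrix e e := by
    intro B
    rw [transpose_submatrix, submatrix_mul _ _ _ id _ Function.bijective_id,
      submatrix_mul _ _ _ id _ Function.bijective_id, submatrix_id_id]
  refine ⟨U.submatrix id e, ?_, ?_⟩
  · rw [← Matrix.mul_one (U.submatrix id e)ᵀ, hconj, Matrix.mul_one,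
      hA.transpose_eigenvectorUnitary_mul_self, submatrix_one_embedding]
  · rw [hconj, hA.transpose_eigenvectorUnitary_mul_mul_eigenvectorUnitary,
      submatrix_diagonal_embedding, trace_diagonal, sumLowEig_eq_sum_sort l hA,
      Fin.sum_filter_val_lt_eq_sum_castLE hln]
    rfl

theorem sumLowEig_sub_le {n l : ℕ} (hl : 0 < l) (hln : l ≤ n) {A D : Matrix (Fin n) (Fin n) ℝ}
    (hA : A.IsHermitian) (hD : D.IsHermitian)
    (hDV : ∀ V : Matrix (Fin n) (Fin l) ℝ, Vᵀ * V = 1 → 0 ≤ (Vᵀ * D * V).trace) :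
    sumLowEig n l (A - D) ≤ sumLowEig n l A := by
  obtain ⟨V, hV, hAV⟩ := exists_transpose_mul_self_eq_one_trace_eq_sumLowEig hln hA
  calc sumLowEig n l (A - D) ≤ (Vᵀ * (A - D) * V).trace :=
        sumLowEig_le_trace hl hln (hA.sub hD) hV
    _ = (Vᵀ * A * V).trace - (Vᵀ * D * V).trace := by
        rw [Matrix.mul_sub, Matrix.sub_mul, trace_sub]
    _ ≤ (Vᵀ * A * V).trace := sub_le_self _ (hDV V hV)
    _ = sumLowEig n l A := hAV

/-- Lemma B.2. -/
theorem stmt_11 (n k l : ℕ) (hk1 : 1 ≤ k) (hkl : k < l) (hln : l ≤ n)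
    (δ : Fin k → ℝ) (hδle : ∀ i, δ i ≤ ((l : ℝ) - k) / k)
    (M : Matrix (Fin n) (Fin n) ℝ) (hM : M.IsHermitian) :
    sumLowEig n l
      (M - Matrix.diagonal (fun i : Fin n =>
        if (i : ℕ) < n - k then (1 : ℝ)
        else -(δ ⟨(i : ℕ) - (n - k), by have := i.isLt; omega⟩))) ≤
      sumLowEig n l M := by
  set C : ℝ := ((l : ℝ) - k) / k
  have hs : #(univ.filter fun i : Fin n => ¬ (i : ℕ) < n - k) = k := by
    have := Finset.card_filter_add_card_filter_not (s := univ) (fun i : Fin n => (i : ℕ) < n - k)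
    rw [Fin.card_filter_val_lt, Finset.card_univ, Fintype.card_fin] at this
    omega
  set s := univ.filter (fun i : Fin n => ¬ (i : ℕ) < n - k)
  have hk : (0 : ℝ) < k := by exact_mod_cast hk1
  have hC : 0 ≤ C := div_nonneg (sub_nonneg.mpr (by exact_mod_cast hkl.le)) hk.le
  have hCk : (1 + C) * #s ≤ l := by
    rw [hs, add_mul, one_mul, div_mul_cancel₀ _ hk.ne']
    linarith
  refine sumLowEig_sub_le (by omega) hln hM (isHermitian_diagonal _) fun V hV =>
    trace_transpose_mul_diagonal_mul_nonneg hV s hC ?_ ?_ (by rwa [Fintype.card_fin])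
  · intro i hi
    simp only [s, Finset.mem_filter, Finset.mem_univ, true_and, not_not] at hi
    rw [if_pos hi]
  · intro i hi
    simp only [s, Finset.mem_filter, Finset.mem_univ, true_and] at hi
    rw [if_neg hi, neg_le_neg_iff]
    exact hδle _
end
end

section
/- Let Ω ⊂ ℝⁿ be an open set and 1 ≤ k ≤ n. Let u ∈ A_k(Ω), i.e. u is viscosity k-superaffine on Ω, and let v ∈ C²(Ω) satisfy λ₁(∇²v)(x) + ⋯ + λ_k(∇²v)(x) ≥ 0 for all x ∈ Ω and sup_Ω v < ∞. Then u − v ∈ A₁(Ω), i.e. u − v is viscosity 1-superaffine on Ω. -/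
/-!
If `φ` touches `u - v` from below at `x`, then `φ + v` touches `u` from below there, so
`S_k(∇²φ + ∇²v) ≤ 0`, where `S_k = λ₁ + ⋯ + λ_k`. By Ky Fan's minimum principle `S_k` is
superadditive on symmetric matrices, hence `S_k(∇²φ) ≤ S_k(∇²φ + ∇²v) - S_k(∇²v) ≤ 0`, and
`k λ₁ ≤ S_k` gives `λ₁(∇²φ) ≤ 0`. Lower semicontinuity and the lower bound pass to `u - v`
because `v` is continuous and bounded above.
-/

open Filter Metric Set MeasureTheory Topology

attribute [local instance] Matrix.normedAddCommGroup Matrix.normedSpace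

noncomputable section

/-- `u` is viscosity `k`-superaffine on `Ω` (`u ∈ A_k(Ω)`): `u` is lower semicontinuous
and bounded below on `Ω`, and whenever a `C²` test function `φ` touches `u` from below at a
point of `Ω`, the sum of the `k` smallest eigenvalues of `∇²φ` there is `≤ 0`. -/
def ViscositySuperaffine (n k : ℕ) (Ω : Set (EuclideanSpace ℝ (Fin n)))
    (u : EuclideanSpace ℝ (Fin n) → ℝ) : Prop :=
  LowerSemicontinuousOn u Ω ∧ BddBelow (u '' Ω) ∧
  ∀ φ : EuclideanSpace ℝ (Fin n) → ℝ, ContDiffOn ℝ 2 φ Ω → (∀ x ∈ Ω, φ x ≤ u x) →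
    ∀ x ∈ Ω, φ x = u x → sumLowEig n k (hessianMatrix n φ x) ≤ 0

section Spectral

open RealInnerProductSpace

variable {n : ℕ}

lemma Fin.filter_val_lt_eq_map_castLE {k : ℕ} (hk : k ≤ n) :
    (Finset.univ.filter fun i : Fin n => (i : ℕ) < k) =
      Finset.univ.map (Fin.castLEEmb hk) := by
  ext i
  simp only [Finset.mem_filter, Finset.mem_univ, true_and, Finset.mem_map]
  exact ⟨fun h => ⟨⟨i, h⟩, rfl⟩, by rintro ⟨j, rfl⟩; simp⟩

/-- The bathtub principle. -/
lemma sum_filter_val_lt_le_sum_mul {k : ℕ} (hk1 : 1 ≤ k) (hk2 : k ≤ n) {g s : Fin n → ℝ}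
    (hg : Monotone g) (hs0 : ∀ i, 0 ≤ s i) (hs1 : ∀ i, s i ≤ 1) (hsum : ∑ i, s i = k) :
    ∑ i ∈ Finset.univ.filter (fun i : Fin n => (i : ℕ) < k), g i ≤ ∑ i, g i * s i := by
  set m := g ⟨k - 1, by omega⟩
  have hcard : ((Finset.univ.filter fun i : Fin n => (i : ℕ) < k).card : ℝ) = k := by
    simp [Fin.filter_val_lt_eq_map_castLE hk2]
  -- each term is nonnegative because `g i - m` and `s i - 𝟙(i < k)` have the same sign
  have hnonneg : 0 ≤ ∑ i, (g i - m) * (s i - if (i : ℕ) < k then 1 else 0) := by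
    refine Finset.sum_nonneg fun i _ => ?_
    by_cases h : (i : ℕ) < k
    · have : g i ≤ m := hg (Fin.mk_le_mk.mpr (by omega))
      rw [if_pos h]; nlinarith [hs1 i]
    · have : m ≤ g i := hg (Fin.mk_le_mk.mpr (by omega))
      rw [if_neg h]; nlinarith [hs0 i]
  have hexpand : ∑ i, (g i - m) * (s i - if (i : ℕ) < k then 1 else 0) =
      ∑ i, g i * s i - ∑ i ∈ Finset.univ.filter (fun i : Fin n => (i : ℕ) < k), g i
        - m * ∑ i, s i + m * (Finset.univ.filter fun i : Fin n => (i : ℕ) < k).card := by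
    rw [Finset.sum_filter, ← Finset.sum_boole (p := fun i : Fin n => (i : ℕ) < k)]
    simp only [Finset.mul_sum, ← Finset.sum_sub_distrib, ← Finset.sum_add_distrib]
    refine Finset.sum_congr rfl fun i _ => ?_
    by_cases h : (i : ℕ) < k <;> simp [h] <;> ring
  rw [hexpand, hcard, hsum] at hnonneg
  linarith

def quadForm (M : Matrix (Fin n) (Fin n) ℝ) (x : EuclideanSpace ℝ (Fin n)) : ℝ :=
  ⟪x, Matrix.toEuclideanLin M x⟫

lemma quadForm_add (A B : Matrix (Fin n) (Fin n) ℝ) (x : EuclideanSpace ℝ (Fin n)) :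
    quadForm (A + B) x = quadForm A x + quadForm B x := by
  rw [quadForm, map_add, LinearMap.add_apply, inner_add_right, quadForm, quadForm]

namespace Matrix.IsHermitian

variable {M : Matrix (Fin n) (Fin n) ℝ} (hM : M.IsHermitian)
include hM

lemma toEuclideanLin_eigenvectorBasis (j : Fin n) :
    toEuclideanLin M (hM.eigenvectorBasis j) = hM.eigenvalues j • hM.eigenvectorBasis j := by
  rw [toLpLin_apply, hM.mulVec_eigenvectorBasis]
  rfl

lemma quadForm_eigenvectorBasis (j : Fin n) :
    quadForm M (hM.eigenvectorBasis j) = hM.eigenvalues j := by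
  rw [quadForm, hM.toEuclideanLin_eigenvectorBasis, inner_smul_right,
    real_inner_self_eq_norm_sq, hM.eigenvectorBasis.orthonormal.1 j, one_pow, mul_one]

lemma quadForm_eq_sum (x : EuclideanSpace ℝ (Fin n)) :
    quadForm M x = ∑ j, hM.eigenvalues j * ⟪hM.eigenvectorBasis j, x⟫ ^ 2 := by
  have hx : toEuclideanLin M x
      = ∑ j, (hM.eigenvalues j * ⟪hM.eigenvectorBasis j, x⟫) • hM.eigenvectorBasis j := by
    conv_lhs => rw [← hM.eigenvectorBasis.sum_repr' x]
    simp only [map_sum, _root_.map_smul, hM.toEuclideanLin_eigenvectorBasis, smul_smul, mul_comm]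
  rw [quadForm, hx, inner_sum]
  refine Finset.sum_congr rfl fun j _ => ?_
  rw [inner_smul_right, real_inner_comm x]
  ring

lemma sortedEig_eq : sortedEig n M = hM.eigenvalues ∘ Tuple.sort hM.eigenvalues := by
  rw [sortedEig, dif_pos hM]

/-- Ky Fan's minimum principle. The weights `t j = ∑ᵢ ⟪e_j, v_i⟫²` of the eigenvalues in
`∑ᵢ ⟪v_i, M v_i⟫` lie in `[0, 1]` by Bessel's inequality and sum to `k`. -/
lemma sumLowEig_le_sum_quadForm {k : ℕ} (hk1 : 1 ≤ k) (hk2 : k ≤ n) {ι : Type*} [Fintype ι]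
    {v : ι → EuclideanSpace ℝ (Fin n)} (hv : Orthonormal ℝ v) (hcard : Fintype.card ι = k) :
    sumLowEig n k M ≤ ∑ i, quadForm M (v i) := by
  set e := hM.eigenvectorBasis
  set t : Fin n → ℝ := fun j => ∑ i, ⟪e j, v i⟫ ^ 2
  have ht0 (j : Fin n) : 0 ≤ t j := Finset.sum_nonneg fun i _ => sq_nonneg _
  have ht1 (j : Fin n) : t j ≤ 1 := by
    calc t j = ∑ i, ‖⟪v i, e j⟫‖ ^ 2 := by simp only [t, real_inner_comm, Real.norm_eq_abs, sq_abs]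
      _ ≤ ‖e j‖ ^ 2 := hv.sum_inner_products_le _
      _ = 1 := by rw [e.orthonormal.1 j, one_pow]
  have hnorm (i : ι) : ∑ j, ⟪e j, v i⟫ ^ 2 = 1 := by
    have := e.sum_inner_mul_inner (v i) (v i)
    rw [real_inner_self_eq_norm_sq, hv.1 i, one_pow] at this
    simpa only [real_inner_comm (v i), sq] using this
  have htsum : ∑ j, t j = k := by
    simp only [t]
    rw [Finset.sum_comm, Finset.sum_congr rfl fun i _ => hnorm i]
    simp [hcard]
  have hquad : ∑ i, quadForm M (v i) = ∑ j, hM.eigenvalues j * t j := by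
    simp only [hM.quadForm_eq_sum, t, Finset.mul_sum]
    exact Finset.sum_comm
  set σ := Tuple.sort hM.eigenvalues
  rw [hquad, ← Equiv.sum_comp σ, sumLowEig, hM.sortedEig_eq]
  exact sum_filter_val_lt_le_sum_mul hk1 hk2 (Tuple.monotone_sort _) (fun _ => ht0 _)
    (fun _ => ht1 _) (by rw [Equiv.sum_comp σ t, htsum])

lemma exists_orthonormal_sumLowEig_eq {k : ℕ} (hk : k ≤ n) :
    ∃ v : Fin k → EuclideanSpace ℝ (Fin n),
      Orthonormal ℝ v ∧ sumLowEig n k M = ∑ i, quadForm M (v i) := by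
  set σ := Tuple.sort hM.eigenvalues
  have hinj : Function.Injective fun i : Fin k => σ (Fin.castLE hk i) :=
    σ.injective.comp (Fin.castLE_injective hk)
  refine ⟨fun i => hM.eigenvectorBasis (σ (Fin.castLE hk i)),
    hM.eigenvectorBasis.orthonormal.comp _ hinj, ?_⟩
  rw [sumLowEig, Fin.filter_val_lt_eq_map_castLE hk, Finset.sum_map, hM.sortedEig_eq]
  simp only [hM.quadForm_eigenvectorBasis]
  rfl

lemma mul_sumLowEig_one_le {k : ℕ} (hk1 : 1 ≤ k) (hk2 : k ≤ n) :
    k * sumLowEig n 1 M ≤ sumLowEig n k M := by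
  obtain ⟨v, hv, hsum⟩ := hM.exists_orthonormal_sumLowEig_eq hk2
  have hlow (i : Fin k) : sumLowEig n 1 M ≤ quadForm M (v i) := by
    simpa using hM.sumLowEig_le_sum_quadForm le_rfl (hk1.trans hk2)
      (hv.comp (fun _ : Fin 1 => i) (fun a b _ => Subsingleton.elim a b)) (Fintype.card_fin 1)
  calc k * sumLowEig n 1 M = ∑ _i : Fin k, sumLowEig n 1 M := by simp
    _ ≤ ∑ i, quadForm M (v i) := Finset.sum_le_sum fun i _ => hlow i
    _ = sumLowEig n k M := hsum.symm

end Matrix.IsHermitian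

/-- Test Ky Fan's principle for `A` and for `B` against the lowest `k` eigenvectors of
`A + B`. -/
lemma sumLowEig_add_le {k : ℕ} (hk1 : 1 ≤ k) (hk2 : k ≤ n) {A B : Matrix (Fin n) (Fin n) ℝ}
    (hA : A.IsHermitian) (hB : B.IsHermitian) :
    sumLowEig n k A + sumLowEig n k B ≤ sumLowEig n k (A + B) := by
  obtain ⟨v, hv, hsum⟩ := (hA.add hB).exists_orthonormal_sumLowEig_eq hk2
  calc sumLowEig n k A + sumLowEig n k B
      ≤ ∑ i, quadForm A (v i) + ∑ i, quadForm B (v i) :=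
        add_le_add (hA.sumLowEig_le_sum_quadForm hk1 hk2 hv (Fintype.card_fin k))
          (hB.sumLowEig_le_sum_quadForm hk1 hk2 hv (Fintype.card_fin k))
    _ = sumLowEig n k (A + B) := by
        rw [hsum, ← Finset.sum_add_distrib]
        simp only [quadForm_add]

end Spectral

section Hessian

variable {n : ℕ} {f g : EuclideanSpace ℝ (Fin n) → ℝ} {x : EuclideanSpace ℝ (Fin n)}

lemma hessianMatrix_isHermitian (hf : ContDiffAt ℝ 2 f x) : (hessianMatrix n f x).IsHermitian := by
  ext i j
  simpa [hessianMatrix, iteratedFDeriv_two_apply] using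
    (hf.isSymmSndFDerivAt (by simp)).eq (EuclideanSpace.single j 1) (EuclideanSpace.single i 1)

lemma hessianMatrix_add {Ω : Set (EuclideanSpace ℝ (Fin n))} (hΩ : IsOpen Ω)
    (hf : ContDiffOn ℝ 2 f Ω) (hg : ContDiffOn ℝ 2 g Ω) (hx : x ∈ Ω) :
    hessianMatrix n (fun y => f y + g y) x = hessianMatrix n f x + hessianMatrix n g x := by
  have h : iteratedFDeriv ℝ 2 (fun y => f y + g y) x
      = iteratedFDeriv ℝ 2 f x + iteratedFDeriv ℝ 2 g x := by
    simp only [← iteratedFDerivWithin_of_isOpen 2 hΩ hx]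
    exact fun_iteratedFDerivWithin_add_apply (hf x hx) (hg x hx) hΩ.uniqueDiffOn hx
  ext i j
  simp only [hessianMatrix, Matrix.add_apply, h, add_apply]

end Hessian

/-- Lemma D.4: subtracting a `C²` function `v` with
`λ₁(∇²v) + ⋯ + λ_k(∇²v) ≥ 0` from a viscosity `k`-superaffine function yields a viscosity
1-superaffine function. -/
theorem stmt_15 (n k : ℕ) (hk1 : 1 ≤ k) (hk2 : k ≤ n)
    (Ω : Set (EuclideanSpace ℝ (Fin n))) (hΩopen : IsOpen Ω)
    (u : EuclideanSpace ℝ (Fin n) → ℝ) (hu : ViscositySuperaffine n k Ω u)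
    (v : EuclideanSpace ℝ (Fin n) → ℝ) (hv : ContDiffOn ℝ 2 v Ω)
    (hvk : ∀ x ∈ Ω, 0 ≤ sumLowEig n k (hessianMatrix n v x))
    (hvbdd : BddAbove (v '' Ω)) :
    ViscositySuperaffine n 1 Ω (fun x => u x - v x) := by
  obtain ⟨hlsc, ⟨m, hm⟩, hvisc⟩ := hu
  obtain ⟨M, hM⟩ := hvbdd
  refine ⟨hlsc.add hv.continuousOn.neg.lowerSemicontinuousOn, ⟨m - M, ?_⟩, ?_⟩
  · rintro _ ⟨x, hx, rfl⟩
    exact sub_le_sub (hm ⟨x, hx, rfl⟩) (hM ⟨x, hx, rfl⟩)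
  intro φ hφ hφle x hx hφx
  have hsum := hvisc (fun y => φ y + v y) (hφ.add hv)
    (fun y hy => by linarith [hφle y hy]) x hx (by linarith)
  rw [hessianMatrix_add hΩopen hφ hv hx] at hsum
  have hφH := hessianMatrix_isHermitian (hφ.contDiffAt (hΩopen.mem_nhds hx))
  have hvH := hessianMatrix_isHermitian (hv.contDiffAt (hΩopen.mem_nhds hx))
  have hφk : sumLowEig n k (hessianMatrix n φ x) ≤ 0 := by
    linarith [sumLowEig_add_le hk1 hk2 hφH hvH, hvk x hx]
  have hk : (1 : ℝ) ≤ k := by exact_mod_cast hk1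
  nlinarith [hφH.mul_sumLowEig_one_le hk1 hk2]
end
end

section
/- Let n ≥ 1, let Ω ⊂ ℝⁿ be a bounded domain with diameter d, let C ≥ 0 be a constant, and let u : Ω → ℝ be canonical quasi-superharmonic with constant C. Let ω : [0, 2d) → [0, ∞) be a continuous nondecreasing function. Suppose x̄, ȳ ∈ Ω are such that the closed ball of radius 2|x̄ − ȳ| centered at x̄ is contained in Ω, and p, q ∈ ℝⁿ satisfy u(y) ≥ u(x̄) + p·(y − x̄) − |y − x̄| ω(|y − x̄|) for all y ∈ Ω and u(y) ≥ u(ȳ) + q·(y − ȳ) − |y − ȳ| ω(|y − ȳ|) for all y ∈ Ω. Then there exists a constant C₁ depending only on n and C such that |p − q| ≤ C₁ ω(2|x̄ − ȳ|) + C₁ |x̄ − ȳ|. -/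
open Filter Metric Set MeasureTheory Topology

attribute [local instance] Matrix.normedAddCommGroup Matrix.normedSpace

noncomputable section

/-- `u` is canonical quasi-superharmonic with constant `C` on `Ω`: `u` is locally integrable
on `Ω` and `u(x) - (C/2n)|x|²` satisfies the super-mean-value inequality on every ball
`B_r(x)` with `x ∈ Ω` and `0 < r < dist(x, ∂Ω)`. -/
def CanonicalQuasiSuperharmonic (n : ℕ) (C : ℝ) (Ω : Set (EuclideanSpace ℝ (Fin n)))
    (u : EuclideanSpace ℝ (Fin n) → ℝ) : Prop :=
  MeasureTheory.LocallyIntegrableOn u Ω ∧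
  ∀ x ∈ Ω, ∀ r : ℝ, 0 < r → r < Metric.infDist x Ωᶜ →
    (⨍ y in Metric.ball x r, (u y - (C / (2 * n)) * ‖y‖ ^ 2)) ≤ u x - (C / (2 * n)) * ‖x‖ ^ 2

/-!
Let `ℓ₁ = u x̄ + ⟪p, · - x̄⟫` and `ℓ₂ = u ȳ + ⟪q, · - ȳ⟫`, and let `B` be a ball of radius
`r ≥ |x̄ - ȳ|` around `x̄` or `ȳ`. Up to `t ω(t)` with `t = r + |x̄ - ȳ|`, `u` dominates
`max ℓ₁ ℓ₂ = ℓ₂ + (ℓ₁ - ℓ₂)⁺` on `B`. By the super-mean-value property the mean of `u` over `B` is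
at most its value at the centre plus `C r² / 2n`, while the mean of an affine function is its value
at the centre, and the positive part of the affine function `ℓ₁ - ℓ₂` of slope `p - q` gains
`≳ 8⁻ⁿ |p - q| r` on a small ball where `ℓ₁ - ℓ₂` is very negative. Comparing the two gives
`|p - q| r ≲ C r² + t ω(t)`; take `r = |x̄ - ȳ|`, or let `r → 0` when `x̄ = ȳ`.
-/

open scoped RealInnerProductSpace

section BallIntegrals

variable {E : Type*} [NormedAddCommGroup E] [InnerProductSpace ℝ E] [FiniteDimensional ℝ E]
  [MeasurableSpace E] [BorelSpace E] (μ : Measure E) [μ.IsAddHaarMeasure]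

lemma Continuous.integrableOn_ball {f : E → ℝ} (hf : Continuous f) (z : E) (r : ℝ) :
    IntegrableOn f (ball z r) μ :=
  (hf.continuousOn.integrableOn_compact (isCompact_closedBall z r)).mono_set
    ball_subset_closedBall

/-- The point reflection `y ↦ 2z - y` preserves `μ` and `ball z r`, and negates the integrand. -/
lemma setIntegral_ball_inner_sub_center (v z : E) (r : ℝ) :
    ∫ y in ball z r, ⟪v, y - z⟫ ∂μ = 0 := by
  have hpre : (fun y => (z + z) - y) ⁻¹' ball z r = ball z r := by
    ext y
    simp only [mem_preimage, mem_ball, dist_eq_norm]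
    rw [← norm_neg]
    congr! 2
    abel
  have h := (Measure.measurePreserving_sub_left μ (z + z)).setIntegral_preimage_emb
    (Homeomorph.subLeft (z + z)).measurableEmbedding (fun y => ⟪v, y - z⟫) (ball z r)
  have hneg : ∀ y, ⟪v, (z + z) - y - z⟫ = -⟪v, y - z⟫ := fun y => by
    rw [← inner_neg_right]; congr 1; abel
  simp only [hpre, hneg, integral_neg] at h
  linarith

lemma setIntegral_ball_add_inner_sub_center (a : ℝ) (v z : E) (r : ℝ) :
    ∫ y in ball z r, (a + ⟪v, y - z⟫) ∂μ = μ.real (ball z r) * a := by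
  rw [integral_add (integrableOn_const measure_ball_lt_top.ne : IntegrableOn (fun _ => a) _ μ)
      (Continuous.integrableOn_ball μ (by fun_prop) z r),
    setIntegral_ball_inner_sub_center, setIntegral_const, smul_eq_mul, add_zero]

lemma setIntegral_ball_norm_sq_le (z : E) (r : ℝ) :
    ∫ y in ball z r, ‖y‖ ^ 2 ∂μ ≤ μ.real (ball z r) * (‖z‖ ^ 2 + r ^ 2) := by
  rw [← setIntegral_ball_add_inner_sub_center μ _ ((2 : ℝ) • z)]
  refine setIntegral_mono_on (Continuous.integrableOn_ball μ (by fun_prop) z r)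
    (Continuous.integrableOn_ball μ (by fun_prop) z r) measurableSet_ball fun y hy => ?_
  have hyz : ‖y - z‖ ^ 2 ≤ r ^ 2 := by
    have := mem_ball_iff_norm.1 hy
    gcongr
  have hexp : ‖y‖ ^ 2 = ‖z‖ ^ 2 + 2 * ⟪z, y - z⟫ + ‖y - z‖ ^ 2 := by
    simpa using norm_add_sq_real z (y - z)
  rw [real_inner_smul_left]
  linarith

lemma measureReal_ball_mul {k : ℝ} (hk : 0 < k) (x y : E) (r : ℝ) :
    μ.real (ball x (k * r)) = k ^ Module.finrank ℝ E * μ.real (ball y r) := by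
  rw [measureReal_def, measureReal_def, Measure.addHaar_ball_mul_of_pos μ x hk,
    Measure.addHaar_ball_center μ y, ENNReal.toReal_mul, ENNReal.toReal_ofReal (by positivity)]

lemma setIntegral_ball_le_of_average_le {u : E → ℝ} {z : E} {c r : ℝ} (hc : 0 ≤ c) (hr : 0 < r)
    (hu : IntegrableOn u (ball z r) μ)
    (havg : ⨍ y in ball z r, (u y - c * ‖y‖ ^ 2) ∂μ ≤ u z - c * ‖z‖ ^ 2) :
    ∫ y in ball z r, u y ∂μ ≤ μ.real (ball z r) * (u z + c * r ^ 2) := by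
  have hV : 0 < μ.real (ball z r) :=
    ENNReal.toReal_pos (measure_ball_pos μ z hr).ne' measure_ball_lt_top.ne
  rw [setAverage_eq, smul_eq_mul, inv_mul_le_iff₀ hV,
    integral_sub hu (Continuous.integrableOn_ball μ (by fun_prop) z r),
    integral_const_mul] at havg
  have := mul_le_mul_of_nonneg_left (setIntegral_ball_norm_sq_le μ z r) hc
  linarith

/-- `L = s + ⟪w, · - z⟫` has mean `s` on `ball z r`, and `L ≤ -‖w‖ r / 4` on the ball of radius
`r / 8` centred at `z - (7 r / 8) w / ‖w‖`, where `max L 0` therefore exceeds `L` by `‖w‖ r / 4`. -/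
lemma setIntegral_ball_max_affine_ge (w z : E) {s r : ℝ} (hr : 0 < r) (hs : s ≤ ‖w‖ * r / 2) :
    μ.real (ball z r) * (s + ‖w‖ * r / (4 * 8 ^ Module.finrank ℝ E))
      ≤ ∫ y in ball z r, max (s + ⟪w, y - z⟫) 0 ∂μ := by
  set L : E → ℝ := fun y => s + ⟪w, y - z⟫ with hL
  set c : E := z - ((7 / 8 * r) * ‖w‖⁻¹) • w
  have hnorm : ‖w‖⁻¹ * ‖w‖ ^ 2 = ‖w‖ := by
    rcases eq_or_ne ‖w‖ 0 with h | h
    · simp [h]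
    · field_simp
  have hcz : ⟪w, c - z⟫ = -(7 / 8 * r * ‖w‖) := by
    simp only [c, sub_sub_cancel_left, inner_neg_right, real_inner_smul_right,
      real_inner_self_eq_norm_sq]
    rw [mul_assoc, hnorm]
  have hsub : ball c (8⁻¹ * r) ⊆ ball z r := by
    refine ball_subset_ball' ?_
    have : ‖w‖⁻¹ * ‖w‖ ≤ 1 := inv_mul_le_one_of_le₀ le_rfl (norm_nonneg w)
    rw [dist_eq_norm, sub_sub_cancel_left, norm_neg, norm_smul, Real.norm_of_nonneg (by positivity)]
    nlinarith
  have hneg : ∀ y ∈ ball c (8⁻¹ * r), ‖w‖ * r / 4 ≤ max (-L y) 0 := fun y hy => by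
    have hyc : ⟪w, y - c⟫ ≤ ‖w‖ * (8⁻¹ * r) :=
      (real_inner_le_norm w _).trans (by gcongr; exact (mem_ball_iff_norm.1 hy).le)
    have hsplit : L y = s + ⟪w, y - c⟫ + ⟪w, c - z⟫ := by
      rw [hL, add_assoc, ← inner_add_right, sub_add_sub_cancel]
    exact le_max_of_le_left (by linarith)
  have hmax : (fun y => max (L y) 0) = fun y => L y + max (-L y) 0 := by
    ext y
    rcases le_total (L y) 0 with h | h
    · rw [max_eq_right h, max_eq_left (neg_nonneg.2 h), add_neg_cancel]
    · rw [max_eq_left h, max_eq_right (neg_nonpos.2 h), add_zero]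
  have hcap : μ.real (ball z r) * (‖w‖ * r / (4 * 8 ^ Module.finrank ℝ E))
      ≤ ∫ y in ball z r, max (-L y) 0 ∂μ :=
    calc μ.real (ball z r) * (‖w‖ * r / (4 * 8 ^ Module.finrank ℝ E))
        = μ.real (ball c (8⁻¹ * r)) * (‖w‖ * r / 4) := by
          rw [measureReal_ball_mul μ (by norm_num) c z r, inv_pow]
          field_simp
      _ ≤ ∫ y in ball c (8⁻¹ * r), max (-L y) 0 ∂μ := by
          rw [← smul_eq_mul, ← setIntegral_const]
          exact setIntegral_mono_on (integrableOn_const measure_ball_lt_top.ne)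
            (Continuous.integrableOn_ball μ (by fun_prop) _ _) measurableSet_ball hneg
      _ ≤ ∫ y in ball z r, max (-L y) 0 ∂μ :=
          setIntegral_mono_set (Continuous.integrableOn_ball μ (by fun_prop) _ _)
            (Eventually.of_forall fun _ => le_max_right _ _) hsub.eventuallyLE
  change _ ≤ ∫ y in ball z r, (fun y => max (L y) 0) y ∂μ
  rw [hmax, integral_add (Continuous.integrableOn_ball μ (by fun_prop : Continuous L) z r)
    (Continuous.integrableOn_ball μ (by fun_prop) z r), hL,
    setIntegral_ball_add_inner_sub_center, mul_add]
  exact add_le_add_right hcap _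

lemma norm_sub_mul_le_of_affine_minorants {u : E → ℝ} {z p₁ p₂ : E} {a c θ r : ℝ} (hr : 0 < r)
    (hu : IntegrableOn u (ball z r) μ)
    (hmean : ∫ y in ball z r, u y ∂μ ≤ μ.real (ball z r) * (u z + c * r ^ 2))
    (h₁ : ∀ y ∈ ball z r, u z + ⟪p₁, y - z⟫ - θ ≤ u y)
    (h₂ : ∀ y ∈ ball z r, a + ⟪p₂, y - z⟫ - θ ≤ u y)
    (ha : u z - a ≤ ‖p₁ - p₂‖ * r / 2) :
    ‖p₁ - p₂‖ * r / (4 * 8 ^ Module.finrank ℝ E) ≤ c * r ^ 2 + θ := by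
  set V := μ.real (ball z r)
  have hV : 0 < V := ENNReal.toReal_pos (measure_ball_pos μ z hr).ne' measure_ball_lt_top.ne
  have hmax : ∀ y ∈ ball z r,
      (a + ⟪p₂, y - z⟫) + max (u z - a + ⟪p₁ - p₂, y - z⟫) 0 ≤ u y + θ := fun y hy => by
    have := h₁ y hy
    have := h₂ y hy
    rw [inner_sub_left]
    rcases le_total (u z - a + (⟪p₁, y - z⟫ - ⟪p₂, y - z⟫)) 0 with h | h
    · rw [max_eq_right h]; linarith
    · rw [max_eq_left h]; linarith
  have hA : IntegrableOn (fun y => a + ⟪p₂, y - z⟫) (ball z r) μ :=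
    Continuous.integrableOn_ball μ (by fun_prop) z r
  have hM : IntegrableOn (fun y => max (u z - a + ⟪p₁ - p₂, y - z⟫) 0) (ball z r) μ :=
    Continuous.integrableOn_ball μ (by fun_prop) z r
  have hθ : IntegrableOn (fun _ => θ) (ball z r) μ := integrableOn_const measure_ball_lt_top.ne
  have hint : ∫ y in ball z r, ((a + ⟪p₂, y - z⟫) + max (u z - a + ⟪p₁ - p₂, y - z⟫) 0) ∂μ
      ≤ ∫ y in ball z r, (u y + θ) ∂μ :=
    setIntegral_mono_on (hA.add hM) (hu.add hθ) measurableSet_ball hmax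
  rw [integral_add hA hM, integral_add hu hθ, setIntegral_ball_add_inner_sub_center,
    setIntegral_const, smul_eq_mul] at hint
  have hcap := setIntegral_ball_max_affine_ge μ (p₁ - p₂) z hr ha
  have : V * (‖p₁ - p₂‖ * r / (4 * 8 ^ Module.finrank ℝ E)) ≤ V * (c * r ^ 2 + θ) := by
    linarith
  exact le_of_mul_le_mul_left this hV

end BallIntegrals

lemma lt_infDist_compl_of_closedBall_subset {α : Type*} [MetricSpace α] [ProperSpace α]
    {Ω : Set α} (hΩ : IsOpen Ω) (hΩc : Ωᶜ.Nonempty) {x : α} {r : ℝ} (h : closedBall x r ⊆ Ω) :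
    r < infDist x Ωᶜ := by
  obtain ⟨y, hy, hxy⟩ := hΩ.isClosed_compl.exists_infDist_eq_dist hΩc x
  rw [hxy]
  by_contra! hle
  exact hy (h (mem_closedBall'.2 hle))

section Diameter

variable {E : Type*} [NormedAddCommGroup E] [NormedSpace ℝ E] [Nontrivial E]

lemma two_mul_le_diam_of_closedBall_subset {s : Set E} (hs : Bornology.IsBounded s)
    {x : E} {r : ℝ} (hr : 0 ≤ r) (h : closedBall x r ⊆ s) : 2 * r ≤ diam s := by
  obtain ⟨e, he⟩ := exists_norm_eq E hr
  have hmem : ∀ e' : E, ‖e'‖ = r → x + e' ∈ s := fun e' he' =>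
    h (by rw [mem_closedBall, dist_eq_norm, add_sub_cancel_left, he'])
  have hdist : dist (x + e) (x + -e) = 2 * r := by
    rw [dist_eq_norm, add_sub_add_left_eq_sub, sub_neg_eq_add, ← two_smul ℝ, norm_smul, he,
      Real.norm_two]
  exact hdist ▸ dist_le_diam_of_mem hs (hmem e he) (hmem (-e) (by rw [norm_neg, he]))

lemma two_mul_lt_diam_of_lt_infDist_compl {Ω : Set E} (hΩ : Bornology.IsBounded Ω) {x : E}
    {r : ℝ} (hr : 0 ≤ r) (h : r < infDist x Ωᶜ) : 2 * r < diam Ω := by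
  have hsub : closedBall x ((r + infDist x Ωᶜ) / 2) ⊆ Ω :=
    (closedBall_subset_ball (by linarith)).trans ball_infDist_compl_subset
  linarith [two_mul_le_diam_of_closedBall_subset hΩ (by linarith) hsub]

end Diameter

lemma mul_le_mul_apply_of_monotoneOn {ω : ℝ → ℝ} {D t T : ℝ} (hω : MonotoneOn ω (Ico 0 D))
    (hω0 : ∀ t ∈ Ico 0 D, 0 ≤ ω t) (ht : 0 ≤ t) (htT : t ≤ T) (hTD : T < D) :
    t * ω t ≤ T * ω T := by
  have htD : t ∈ Ico 0 D := ⟨ht, htT.trans_lt hTD⟩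
  have hTD' : T ∈ Ico 0 D := ⟨ht.trans htT, hTD⟩
  exact mul_le_mul htT (hω htD hTD' htT) (hω0 t htD) hTD'.1

lemma le_mul_of_forall_mul_div_le {ω : ℝ → ℝ} {m K c ε : ℝ} (hK : 0 < K) (hε : 0 < ε)
    (hω : ContinuousWithinAt ω (Ioi 0) 0)
    (h : ∀ r ∈ Ioo 0 ε, m * r / K ≤ c * r ^ 2 + r * ω r) : m ≤ K * ω 0 := by
  have hlim : Tendsto (fun r => K * (c * r + ω r)) (𝓝[>] 0) (𝓝 (K * (c * 0 + ω 0))) :=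
    ((((continuous_const_mul c).tendsto 0).mono_left nhdsWithin_le_nhds).add hω).const_mul K
  rw [mul_zero, zero_add] at hlim
  refine ge_of_tendsto hlim ?_
  filter_upwards [Ioo_mem_nhdsGT hε] with r hr
  have := h r hr
  rw [div_le_iff₀ hK] at this
  nlinarith [hr.1]

namespace CanonicalQuasiSuperharmonic

variable {n : ℕ} {C D : ℝ} {Ω : Set (EuclideanSpace ℝ (Fin n))}
  {u : EuclideanSpace ℝ (Fin n) → ℝ} {ω : ℝ → ℝ}

lemma norm_sub_mul_le_of_le_half (hu : CanonicalQuasiSuperharmonic n C Ω u) (hC : 0 ≤ C)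
    (hω : MonotoneOn ω (Ico 0 D)) (hω0 : ∀ t ∈ Ico 0 D, 0 ≤ ω t)
    {z₁ z₂ p₁ p₂ : EuclideanSpace ℝ (Fin n)} (hz₁ : z₁ ∈ Ω)
    (hp₁ : ∀ y ∈ Ω, u z₁ + ⟪p₁, y - z₁⟫ - ‖y - z₁‖ * ω ‖y - z₁‖ ≤ u y)
    (hp₂ : ∀ y ∈ Ω, u z₂ + ⟪p₂, y - z₂⟫ - ‖y - z₂‖ * ω ‖y - z₂‖ ≤ u y)
    {r T : ℝ} (hr : 0 < r) (hrΩ : r < infDist z₁ Ωᶜ) (hrT : r + dist z₁ z₂ ≤ T) (hTD : T < D)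
    (hs : u z₁ - (u z₂ + ⟪p₂, z₁ - z₂⟫) ≤ ‖p₁ - p₂‖ * r / 2) :
    ‖p₁ - p₂‖ * r / (4 * 8 ^ n) ≤ C / (2 * n) * r ^ 2 + T * ω T := by
  have hsub : closedBall z₁ r ⊆ Ω :=
    (closedBall_subset_ball hrΩ).trans ball_infDist_compl_subset
  have hint : IntegrableOn u (ball z₁ r) :=
    (hu.1.integrableOn_compact_subset hsub (isCompact_closedBall z₁ r)).mono_set
      ball_subset_closedBall
  have hmean := setIntegral_ball_le_of_average_le volume (by positivity) hr hint
    (hu.2 z₁ hz₁ r hr hrΩ)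
  have herr : ∀ y ∈ ball z₁ r, ∀ z, dist z₁ z ≤ dist z₁ z₂ →
      ‖y - z‖ * ω ‖y - z‖ ≤ T * ω T := fun y hy z hz =>
    mul_le_mul_apply_of_monotoneOn hω hω0 (norm_nonneg _)
      (by linarith [norm_sub_le_norm_sub_add_norm_sub y z₁ z, mem_ball_iff_norm.1 hy,
        dist_eq_norm z₁ z]) hTD
  have key := norm_sub_mul_le_of_affine_minorants volume hr hint hmean
    (p₁ := p₁) (p₂ := p₂) (θ := T * ω T) (fun y hy => ?_) (fun y hy => ?_) hs
  · rwa [finrank_euclideanSpace_fin] at key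
  · linarith [hp₁ y (hsub (ball_subset_closedBall hy)), herr y hy z₁ (by simp)]
  · have : ⟪p₂, y - z₂⟫ = ⟪p₂, z₁ - z₂⟫ + ⟪p₂, y - z₁⟫ := by
      rw [← inner_add_right, sub_add_sub_cancel']
    linarith [hp₂ y (hsub (ball_subset_closedBall hy)), herr y hy z₂ le_rfl]

/-- The two gaps `u x̄ - ℓ_ȳ(x̄)` and `u ȳ - ℓ_x̄(ȳ)` add up to `⟪p - q, x̄ - ȳ⟫ ≤ ‖p - q‖ r`, so
one of them is at most `‖p - q‖ r / 2`; work on the ball around that point. -/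
lemma norm_sub_mul_le (hu : CanonicalQuasiSuperharmonic n C Ω u) (hC : 0 ≤ C)
    (hω : MonotoneOn ω (Ico 0 D)) (hω0 : ∀ t ∈ Ico 0 D, 0 ≤ ω t)
    {xb yb p q : EuclideanSpace ℝ (Fin n)} (hxb : xb ∈ Ω) (hyb : yb ∈ Ω)
    (hp : ∀ y ∈ Ω, u xb + ⟪p, y - xb⟫ - ‖y - xb‖ * ω ‖y - xb‖ ≤ u y)
    (hq : ∀ y ∈ Ω, u yb + ⟪q, y - yb⟫ - ‖y - yb‖ * ω ‖y - yb‖ ≤ u y)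
    {r : ℝ} (hr : 0 < r) (hδr : dist xb yb ≤ r) (hrΩ : r + dist xb yb < infDist xb Ωᶜ)
    (hrD : r + dist xb yb < D) :
    ‖p - q‖ * r / (4 * 8 ^ n)
      ≤ C / (2 * n) * r ^ 2 + (r + dist xb yb) * ω (r + dist xb yb) := by
  have hsum : (u xb - (u yb + ⟪q, xb - yb⟫)) + (u yb - (u xb + ⟪p, yb - xb⟫)) ≤ ‖p - q‖ * r :=
    calc _ = ⟪p - q, xb - yb⟫ := by
          rw [inner_sub_left, ← neg_sub xb yb, inner_neg_right]; ring
      _ ≤ ‖p - q‖ * ‖xb - yb‖ := real_inner_le_norm _ _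
      _ ≤ ‖p - q‖ * r := by rw [← dist_eq_norm]; gcongr; exact hδr
  rcases le_total (u xb - (u yb + ⟪q, xb - yb⟫)) (‖p - q‖ * r / 2) with h | h
  · exact norm_sub_mul_le_of_le_half hu hC hω hω0 hxb hp hq hr
      (by linarith [dist_nonneg (x := xb) (y := yb)]) le_rfl hrD h
  · have hyΩ : r < infDist yb Ωᶜ := by
      linarith [infDist_le_infDist_add_dist (s := Ωᶜ) (x := xb) (y := yb)]
    rw [norm_sub_rev]
    exact norm_sub_mul_le_of_le_half hu hC hω hω0 hyb hq hp hr hyΩ (by rw [dist_comm]) hrD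
      (by rw [norm_sub_rev]; linarith)

lemma norm_sub_le [Nontrivial (EuclideanSpace ℝ (Fin n))]
    (hu : CanonicalQuasiSuperharmonic n C Ω u) (hC : 0 ≤ C) (hΩ : Bornology.IsBounded Ω)
    (hωc : ContinuousOn ω (Ico 0 (2 * diam Ω))) (hω : MonotoneOn ω (Ico 0 (2 * diam Ω)))
    (hω0 : ∀ t ∈ Ico 0 (2 * diam Ω), 0 ≤ ω t)
    {xb yb p q : EuclideanSpace ℝ (Fin n)} (hxb : xb ∈ Ω) (hyb : yb ∈ Ω)
    (hinf : 2 * dist xb yb < infDist xb Ωᶜ)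
    (hp : ∀ y ∈ Ω, u xb + ⟪p, y - xb⟫ - ‖y - xb‖ * ω ‖y - xb‖ ≤ u y)
    (hq : ∀ y ∈ Ω, u yb + ⟪q, y - yb⟫ - ‖y - yb‖ * ω ‖y - yb‖ ≤ u y) :
    ‖p - q‖ ≤ 4 * 8 ^ n * (C / (2 * n) * dist xb yb + 2 * ω (2 * dist xb yb)) := by
  have hK : (0 : ℝ) < 4 * 8 ^ n := by positivity
  have hD : ∀ t, 0 ≤ t → t < infDist xb Ωᶜ → t < 2 * diam Ω := fun t ht htΩ => by
    linarith [two_mul_lt_diam_of_lt_infDist_compl hΩ ht htΩ]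
  have hbound := fun r hr hδr hrΩ =>
    norm_sub_mul_le hu hC hω hω0 hxb hyb hp hq (r := r) hr hδr hrΩ (hD _ (by positivity) hrΩ)
  rcases (dist_nonneg (x := xb) (y := yb)).eq_or_lt with hδ | hδ
  · rw [← hδ] at hinf hbound ⊢
    have hD0 : 0 < 2 * diam Ω := hD 0 le_rfl (by linarith)
    have hlim : ‖p - q‖ ≤ 4 * 8 ^ n * ω 0 :=
      le_mul_of_forall_mul_div_le hK (ε := infDist xb Ωᶜ) (by linarith)
        ((hωc.continuousWithinAt ⟨le_rfl, hD0⟩).mono_of_mem_nhdsWithin (Ico_mem_nhdsGT hD0))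
        fun r hr => by simpa using hbound r hr.1 hr.1.le (by simpa using hr.2)
    have := hω0 0 ⟨le_rfl, hD0⟩
    simp only [mul_zero, zero_add]
    linarith [mul_nonneg hK.le this]
  · have h := hbound _ hδ le_rfl (by linarith)
    rw [← two_mul, div_le_iff₀ hK] at h
    have : dist xb yb * ‖p - q‖
        ≤ dist xb yb * (4 * 8 ^ n * (C / (2 * n) * dist xb yb + 2 * ω (2 * dist xb yb))) := by
      linarith
    exact le_of_mul_le_mul_left this hδ

end CanonicalQuasiSuperharmonic

/-- Lemma F.2: uniqueness, up to a quantitative modulus, of lower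
supporting slopes of quasi-superharmonic functions. -/
theorem stmt_16 (n : ℕ) (hn : 1 ≤ n) (C : ℝ) (hC : 0 ≤ C) :
    ∃ C₁ : ℝ, ∀ (Ω : Set (EuclideanSpace ℝ (Fin n))), IsOpen Ω → IsConnected Ω →
      Bornology.IsBounded Ω →
      ∀ u : EuclideanSpace ℝ (Fin n) → ℝ, CanonicalQuasiSuperharmonic n C Ω u →
      ∀ ω : ℝ → ℝ, ContinuousOn ω (Ico 0 (2 * Metric.diam Ω)) →
        MonotoneOn ω (Ico 0 (2 * Metric.diam Ω)) →
        (∀ t ∈ Ico (0 : ℝ) (2 * Metric.diam Ω), 0 ≤ ω t) →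
      ∀ xb ∈ Ω, ∀ yb ∈ Ω, closedBall xb (2 * dist xb yb) ⊆ Ω →
      ∀ p q : EuclideanSpace ℝ (Fin n),
        (∀ y ∈ Ω, u xb + (inner ℝ p (y - xb) : ℝ) - ‖y - xb‖ * ω ‖y - xb‖ ≤ u y) →
        (∀ y ∈ Ω, u yb + (inner ℝ q (y - yb) : ℝ) - ‖y - yb‖ * ω ‖y - yb‖ ≤ u y) →
        ‖p - q‖ ≤ C₁ * ω (2 * dist xb yb) + C₁ * dist xb yb := by
  refine ⟨8 ^ (n + 1) * (C + 1), fun Ω hΩ _ hbdd u hu ω hωc hωm hω0 xb hxb yb hyb hball p q hp hq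
    => ?_⟩
  have : Nonempty (Fin n) := ⟨⟨0, hn⟩⟩
  have hΩc : Ωᶜ.Nonempty :=
    nonempty_compl.2 fun h => NormedSpace.unbounded_univ ℝ _ (h ▸ hbdd)
  have hinf := lt_infDist_compl_of_closedBall_subset hΩ hΩc hball
  have hbound := hu.norm_sub_le hC hbdd hωc hωm hω0 hxb hyb hinf hp hq
  have hδ : 0 ≤ dist xb yb := dist_nonneg
  have hω2δ : 0 ≤ ω (2 * dist xb yb) := hω0 _ ⟨by positivity, by
    linarith [two_mul_lt_diam_of_lt_infDist_compl hbdd (by positivity) hinf]⟩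
  have hc : C / (2 * n) ≤ C := div_le_self hC (by norm_cast; omega)
  have h8 : (0 : ℝ) ≤ 8 ^ n := by positivity
  rw [pow_succ]
  nlinarith [mul_le_mul_of_nonneg_left hc (mul_nonneg h8 hδ), mul_nonneg (mul_nonneg h8 hC) hω2δ,
    mul_nonneg (mul_nonneg h8 hC) hδ]
end
end

section
/- Let n ≥ 1, let Ω ⊂ ℝⁿ be a bounded domain with diameter d, let C ≥ 0 be a constant, and let u : Ω → ℝ be canonical quasi-superharmonic with constant C. Let ω : [0, 2d) → [0, ∞) be a continuous nondecreasing function. Suppose x̄, ȳ ∈ Ω with x̄ ≠ ȳ and the closed ball of radius 2|x̄ − ȳ| centered at x̄ contained in Ω, and p, q ∈ ℝⁿ satisfy: u(y) ≥ u(x̄) + p·(y − x̄) − |y − x̄| ω(|y − x̄|) for all y ∈ Ω, and u(z) ≥ u(x̄) + p·(ȳ − x̄) − |ȳ − x̄| ω(|ȳ − x̄|) + q·(z − ȳ) − |z − ȳ| ω(|z − ȳ|) for all z ∈ Ω. Then there exist positive constants C₁ and C₂ depending only on n such that |p − q| ≤ C₁ ω(2|x̄ − ȳ|) + C₂ C |x̄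 − ȳ|. -/
/-!
Put `d = |x̄ - ȳ|`, `w = u - u(x̄) - p·(· - x̄)`, and integrate `w` over `B = B_{7d/4}(x̄)`.
Linear functions average to zero over balls, so the super-mean-value inequality for
`u - (C/2n)|·|²` gives `∫_B w ≤ |B| (C/2n)(7d/4)²`. From below, the first supporting
inequality gives `w ≥ -2dω(2d)` on `B`; on `A = B_{d/4}(ȳ + (d/2)e)`, `e = (q - p)/|q - p|`,
the second one gives `w(z) ≥ (q - p)·(z - ȳ) - 2dω(2d) ≥ |q - p| d/4 - 2dω(2d)`.
Since `|B| = 7ⁿ|A|`, comparing the two bounds yields `|p - q| ≤ 8·7ⁿ(ω(2d) + Cd)`.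
-/

open Filter Metric Set MeasureTheory Topology

attribute [local instance] Matrix.normedAddCommGroup Matrix.normedSpace

noncomputable section

section General

variable {E : Type*} [NormedAddCommGroup E] [InnerProductSpace ℝ E] [FiniteDimensional ℝ E]
  [MeasurableSpace E] [BorelSpace E] (μ : Measure E) [μ.IsAddHaarMeasure]

theorem setIntegral_ball_inner_sub_eq_zero (v x : E) (r : ℝ) :
    ∫ y in ball x r, inner ℝ v (y - x) ∂μ = 0 := by
  have key := (Measure.measurePreserving_sub_left μ (x + x)).setIntegral_preimage_emb
    (MeasurableEquiv.subLeft (x + x)).measurableEmbedding (fun y => inner ℝ v (y - x)) (ball x r)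
  have hball : (fun y => x + x - y) ⁻¹' ball x r = ball x r := by
    ext y
    rw [mem_preimage, mem_ball, mem_ball, dist_eq_norm, dist_eq_norm, ← norm_neg]
    abel_nf
  have hodd : ∀ y : E, inner ℝ v (x + x - y - x) = -inner ℝ v (y - x) := fun y => by
    rw [← inner_neg_right]; abel_nf
  simp only [hball, hodd, integral_neg] at key
  linarith

theorem measureReal_ball_mul_eq (x y : E) {k : ℝ} (hk : 0 < k) (ρ : ℝ) :
    μ.real (ball x (k * ρ)) = k ^ Module.finrank ℝ E * μ.real (ball y ρ) := by
  rw [measureReal_def, measureReal_def, Measure.addHaar_ball_mul_of_pos μ x hk,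
    Measure.addHaar_ball_center μ y, ENNReal.toReal_mul, ENNReal.toReal_ofReal (by positivity)]

end General

theorem ball_add_div_norm_smul_subset {E : Type*} [NormedAddCommGroup E] [NormedSpace ℝ E]
    (y v : E) {a : ℝ} (ha : 0 ≤ a) (ρ : ℝ) : ball (y + (a / ‖v‖) • v) ρ ⊆ ball y (ρ + a) := by
  refine ball_subset_ball' ?_
  rw [dist_self_add_left]
  gcongr
  rcases eq_or_ne v 0 with rfl | hv
  · simpa using ha
  · rw [norm_smul, norm_div, norm_norm, div_mul_cancel₀ _ (norm_ne_zero_iff.2 hv),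
      Real.norm_eq_abs, abs_of_nonneg ha]

theorem mul_norm_le_inner_sub_of_mem_ball {E : Type*} [NormedAddCommGroup E]
    [InnerProductSpace ℝ E] {v y z : E} {a ρ : ℝ} (hz : z ∈ ball (y + (a / ‖v‖) • v) ρ) :
    (a - ρ) * ‖v‖ ≤ inner ℝ v (z - y) := by
  have hcenter : inner ℝ v ((a / ‖v‖) • v) = a * ‖v‖ := by
    rcases eq_or_ne v 0 with rfl | hv
    · simp
    · rw [real_inner_smul_right, real_inner_self_eq_norm_sq]
      field_simp
  have hnear : -(ρ * ‖v‖) ≤ inner ℝ v (z - (y + (a / ‖v‖) • v)) := by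
    have := neg_abs_le (inner ℝ v (z - (y + (a / ‖v‖) • v)))
    have := abs_real_inner_le_norm v (z - (y + (a / ‖v‖) • v))
    rw [← dist_eq_norm] at this
    nlinarith [mem_ball.1 hz, norm_nonneg v]
  have hsplit : z - y = (z - (y + (a / ‖v‖) • v)) + (a / ‖v‖) • v := by abel
  rw [hsplit, inner_add_right, hcenter]
  linarith

theorem Continuous.integrableOn_ball_s17 {X : Type*} [MetricSpace X] [ProperSpace X]
    [MeasurableSpace X] [OpensMeasurableSpace X] {μ : Measure X} [IsFiniteMeasureOnCompacts μ]
    {f : X → ℝ} (hf : Continuous f) (x : X) (r : ℝ) : IntegrableOn f (ball x r) μ :=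
  (hf.continuousOn.integrableOn_compact (isCompact_closedBall x r)).mono_set
    ball_subset_closedBall

theorem mul_measureReal_add_mul_measureReal_le_setIntegral {α : Type*} [MeasurableSpace α]
    {μ : Measure α} {f : α → ℝ} {s t : Set α} {a b : ℝ} (hs : MeasurableSet s) (ht : MeasurableSet t)
    (hts : t ⊆ s) (hμs : μ s ≠ ⊤) (hf : IntegrableOn f s μ) (hfs : ∀ x ∈ s, a ≤ f x)
    (hft : ∀ x ∈ t, a + b ≤ f x) :
    a * μ.real s + b * μ.real t ≤ ∫ x in s, f x ∂μ := by
  have hconst : ∀ c : ℝ, IntegrableOn (fun _ => c) s μ := fun c => integrableOn_const hμs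
  have hg : IntegrableOn (fun x => a + t.indicator (fun _ => b) x) s μ :=
    (hconst a).add ((hconst b).indicator ht)
  calc a * μ.real s + b * μ.real t = ∫ x in s, (a + t.indicator (fun _ => b) x) ∂μ := by
        rw [integral_add (hconst a) ((hconst b).indicator ht), setIntegral_indicator ht,
          inter_eq_self_of_subset_right hts, setIntegral_const, setIntegral_const,
          smul_eq_mul, smul_eq_mul, mul_comm a, mul_comm b]
    _ ≤ ∫ x in s, f x ∂μ := setIntegral_mono_on hg hf hs fun x hx => by
        by_cases hxt : x ∈ t
        · simpa [indicator_of_mem hxt] using hft x hxt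
        · simpa [indicator_of_notMem hxt] using hfs x hx

theorem MonotoneOn.mul_apply_le {ω : ℝ → ℝ} {R t a : ℝ} (hω : MonotoneOn ω (Icc 0 R))
    (hR : 0 ≤ ω R) (ht : t ∈ Icc 0 R) (hta : t ≤ a) : t * ω t ≤ a * ω R :=
  calc t * ω t ≤ t * ω R :=
        mul_le_mul_of_nonneg_left (hω ht ⟨ht.1.trans ht.2, le_rfl⟩ ht.2) ht.1
    _ ≤ a * ω R := mul_le_mul_of_nonneg_right hta hR

theorem le_sub_affine_of_mem_ball_add {E : Type*} [NormedAddCommGroup E]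
    [InnerProductSpace ℝ E] {u : E → ℝ} {ω : ℝ → ℝ} {xb yb p q z : E}
    (hω : MonotoneOn ω (Icc 0 (2 * dist xb yb))) (hω₀ : 0 ≤ ω (2 * dist xb yb))
    (hz : z ∈ ball (yb + ((dist xb yb / 2) / ‖q - p‖) • (q - p)) (dist xb yb / 4))
    (h2 : u xb + inner ℝ p (yb - xb) - ‖yb - xb‖ * ω ‖yb - xb‖ +
        inner ℝ q (z - yb) - ‖z - yb‖ * ω ‖z - yb‖ ≤ u z) :
    -(2 * dist xb yb * ω (2 * dist xb yb)) + dist xb yb / 4 * ‖q - p‖ ≤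
      u z - u xb - inner ℝ p (z - xb) := by
  set d := dist xb yb
  have hd : 0 ≤ d := dist_nonneg
  have hzy : ‖z - yb‖ ≤ d / 4 + d / 2 := by
    rw [← dist_eq_norm]
    exact (mem_ball.1 (ball_add_div_norm_smul_subset yb (q - p) (by positivity) _ hz)).le
  have hyx : ‖yb - xb‖ = d := by rw [← dist_eq_norm, dist_comm]
  have hslope : inner ℝ p (yb - xb) + inner ℝ q (z - yb) - inner ℝ p (z - xb) =
      inner ℝ (q - p) (z - yb) := by
    simp only [inner_sub_left, inner_sub_right]; ring
  have hωz := hω.mul_apply_le hω₀ ⟨norm_nonneg _, by linarith⟩ hzy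
  have hωy := hω.mul_apply_le hω₀ ⟨norm_nonneg _, by linarith⟩ hyx.le
  rw [hyx] at hωy h2
  linarith [mul_norm_le_inner_sub_of_mem_ball hz, mul_nonneg hd hω₀]

namespace CanonicalQuasiSuperharmonic

variable {n : ℕ} {C : ℝ} {Ω : Set (EuclideanSpace ℝ (Fin n))} {u : EuclideanSpace ℝ (Fin n) → ℝ}
  {x : EuclideanSpace ℝ (Fin n)} {r : ℝ}

theorem integrableOn_ball_s17 (hu : CanonicalQuasiSuperharmonic n C Ω u)
    (hr : r < infDist x Ωᶜ) : IntegrableOn u (ball x r) :=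
  (hu.1.integrableOn_compact_subset ((closedBall_subset_ball hr).trans ball_infDist_compl_subset)
    (isCompact_closedBall x r)).mono_set ball_subset_closedBall

theorem setIntegral_ball_sub_affine_le (hu : CanonicalQuasiSuperharmonic n C Ω u) (hC : 0 ≤ C)
    (hx : x ∈ Ω) (hr : 0 < r) (hrΩ : r < infDist x Ωᶜ) (p : EuclideanSpace ℝ (Fin n)) :
    ∫ z in ball x r, (u z - u x - inner ℝ p (z - x)) ≤
      volume.real (ball x r) * (C / (2 * n) * r ^ 2) := by
  set c := C / (2 * n)
  set V := volume.real (ball x r)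
  have hc : 0 ≤ c := by positivity
  have hmean : ∫ z in ball x r, (u z - c * ‖z‖ ^ 2) ≤ V * (u x - c * ‖x‖ ^ 2) := by
    have h := hu.2 x hx r hr hrΩ
    have hV : 0 < V :=
      ENNReal.toReal_pos (measure_ball_pos volume x hr).ne' measure_ball_lt_top.ne
    rwa [setAverage_eq, smul_eq_mul, inv_mul_le_iff₀ hV] at h
  -- `c ‖z‖² = c ‖x‖² + ⟪2c x, z - x⟫ + c ‖z - x‖²`, and `‖z - x‖ < r` on the ball
  have hpt : ∀ z ∈ ball x r, u z - u x - inner ℝ p (z - x) ≤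
      (u z - c * ‖z‖ ^ 2) +
        (inner ℝ ((2 * c) • x - p) (z - x) + (c * r ^ 2 - (u x - c * ‖x‖ ^ 2))) := by
    intro z hz
    have hsq : ‖z‖ ^ 2 = ‖x‖ ^ 2 + 2 * inner ℝ x (z - x) + ‖z - x‖ ^ 2 := by
      rw [← norm_add_sq_real, add_sub_cancel]
    have hzr : ‖z - x‖ ^ 2 ≤ r ^ 2 := by
      rw [← dist_eq_norm]; exact pow_le_pow_left₀ dist_nonneg (mem_ball.1 hz).le 2
    rw [inner_sub_left, real_inner_smul_left, hsq]
    nlinarith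
  have hiu : IntegrableOn (fun z => u z - c * ‖z‖ ^ 2) (ball x r) :=
    (hu.integrableOn_ball_s17 hrΩ).sub (Continuous.integrableOn_ball_s17 (by fun_prop) _ _)
  have hilin : IntegrableOn (fun z => inner ℝ ((2 * c) • x - p) (z - x)) (ball x r) :=
    Continuous.integrableOn_ball_s17 (by fun_prop) _ _
  have hiconst : ∀ k : ℝ, IntegrableOn (fun _ => k) (ball x r) := fun k => integrableOn_const
  have hirest : IntegrableOn (fun z => inner ℝ ((2 * c) • x - p) (z - x) +
      (c * r ^ 2 - (u x - c * ‖x‖ ^ 2))) (ball x r) := hilin.add (hiconst _)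
  calc ∫ z in ball x r, (u z - u x - inner ℝ p (z - x))
      ≤ ∫ z in ball x r, ((u z - c * ‖z‖ ^ 2) + (inner ℝ ((2 * c) • x - p) (z - x) +
          (c * r ^ 2 - (u x - c * ‖x‖ ^ 2)))) :=
        setIntegral_mono_on (((hu.integrableOn_ball_s17 hrΩ).sub (hiconst _)).sub
          (Continuous.integrableOn_ball_s17 (by fun_prop) _ _))
          (hiu.add hirest) measurableSet_ball hpt
    _ ≤ V * (u x - c * ‖x‖ ^ 2) + V * (c * r ^ 2 - (u x - c * ‖x‖ ^ 2)) := by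
        rw [integral_add hiu hirest, integral_add hilin (hiconst _),
          setIntegral_ball_inner_sub_eq_zero, setIntegral_const, smul_eq_mul, zero_add]
        exact add_le_add_left hmean _
    _ = V * (c * r ^ 2) := by ring

theorem norm_sub_le_of_lower_bounds (hu : CanonicalQuasiSuperharmonic n C Ω u) (hC : 0 ≤ C)
    {xb yb : EuclideanSpace ℝ (Fin n)} (hxb : xb ∈ Ω) (hne : xb ≠ yb)
    (hΩ : 2 * dist xb yb ≤ infDist xb Ωᶜ) {ω : ℝ → ℝ}
    (hω : MonotoneOn ω (Icc 0 (2 * dist xb yb))) (hω₀ : 0 ≤ ω (2 * dist xb yb))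
    {p q : EuclideanSpace ℝ (Fin n)}
    (h1 : ∀ y ∈ Ω, u xb + inner ℝ p (y - xb) - ‖y - xb‖ * ω ‖y - xb‖ ≤ u y)
    (h2 : ∀ z ∈ Ω, u xb + inner ℝ p (yb - xb) - ‖yb - xb‖ * ω ‖yb - xb‖ +
        inner ℝ q (z - yb) - ‖z - yb‖ * ω ‖z - yb‖ ≤ u z) :
    ‖p - q‖ ≤ 8 * 7 ^ n * ω (2 * dist xb yb) + 8 * 7 ^ n * C * dist xb yb := by
  set d := dist xb yb
  set ω₂ := ω (2 * d)
  set c := C / (2 * n)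
  have hd : 0 < d := dist_pos.2 hne
  set B := ball xb (7 * (d / 4))
  set A := ball (yb + ((d / 2) / ‖q - p‖) • (q - p)) (d / 4)
  have hrΩ : 7 * (d / 4) < infDist xb Ωᶜ := by linarith
  have hBΩ : B ⊆ Ω := (ball_subset_ball hrΩ.le).trans ball_infDist_compl_subset
  have hAB : A ⊆ B := (ball_add_div_norm_smul_subset yb (q - p) (by positivity) _).trans
    (ball_subset_ball' (by rw [dist_comm]; linarith))
  have hlowB : ∀ z ∈ B, -(2 * d * ω₂) ≤ u z - u xb - inner ℝ p (z - xb) := by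
    intro z hz
    have hzx : ‖z - xb‖ ≤ 2 * d := by rw [← dist_eq_norm]; linarith [mem_ball.1 hz]
    linarith [h1 z (hBΩ hz), hω.mul_apply_le hω₀ ⟨norm_nonneg _, hzx⟩ hzx]
  have hiw : IntegrableOn (fun z => u z - u xb - inner ℝ p (z - xb)) B :=
    ((hu.integrableOn_ball_s17 hrΩ).sub (integrableOn_const measure_ball_lt_top.ne)).sub
      (Continuous.integrableOn_ball_s17 (by fun_prop) _ _)
  have hlower := mul_measureReal_add_mul_measureReal_le_setIntegral measurableSet_ball
    measurableSet_ball hAB measure_ball_lt_top.ne hiw hlowB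
    fun z hz => le_sub_affine_of_mem_ball_add hω hω₀ hz (h2 z (hBΩ (hAB hz)))
  have hupper := hu.setIntegral_ball_sub_affine_le hC hxb (by positivity) hrΩ p
  have hvol : volume.real B = 7 ^ n * volume.real A := by
    simpa only [finrank_euclideanSpace_fin] using
      measureReal_ball_mul_eq volume xb (yb + ((d / 2) / ‖q - p‖) • (q - p)) (by norm_num) (d / 4)
  have hA : 0 < volume.real A :=
    ENNReal.toReal_pos (measure_ball_pos volume _ (by positivity)).ne' measure_ball_lt_top.ne
  have hc : c ≤ C / 2 := by
    rcases Nat.eq_zero_or_pos n with rfl | hn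
    · simp only [c, Nat.cast_zero, mul_zero, div_zero]; positivity
    · exact div_le_div_of_nonneg_left hC two_pos (by norm_cast; omega)
  have hslope : d / 4 * ‖q - p‖ ≤ 7 ^ n * (2 * d * ω₂ + c * (7 * (d / 4)) ^ 2) := by
    refine le_of_mul_le_mul_right ?_ hA
    rw [hvol] at hlower hupper
    linarith
  have h7 : (0 : ℝ) < 7 ^ n := by positivity
  rw [norm_sub_rev]
  refine le_of_mul_le_mul_left ?_ hd
  nlinarith [mul_nonneg (mul_nonneg h7.le (sub_nonneg.2 hc)) (sq_nonneg d),
    mul_nonneg (mul_nonneg h7.le hC) (sq_nonneg d)]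

end CanonicalQuasiSuperharmonic

theorem stmt_17_general (n : ℕ) :
    ∃ C₁ : ℝ, 0 < C₁ ∧ ∃ C₂ : ℝ, 0 < C₂ ∧
    ∀ C : ℝ, 0 ≤ C →
    ∀ (Ω : Set (EuclideanSpace ℝ (Fin n))), IsOpen Ω → IsConnected Ω →
      Bornology.IsBounded Ω →
      ∀ u : EuclideanSpace ℝ (Fin n) → ℝ, CanonicalQuasiSuperharmonic n C Ω u →
      ∀ ω : ℝ → ℝ, ContinuousOn ω (Ico 0 (2 * Metric.diam Ω)) →
        MonotoneOn ω (Ico 0 (2 * Metric.diam Ω)) →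
        (∀ t ∈ Ico (0 : ℝ) (2 * Metric.diam Ω), 0 ≤ ω t) →
      ∀ xb ∈ Ω, ∀ yb ∈ Ω, xb ≠ yb → closedBall xb (2 * dist xb yb) ⊆ Ω →
      ∀ p q : EuclideanSpace ℝ (Fin n),
        (∀ y ∈ Ω, u xb + (inner ℝ p (y - xb) : ℝ) - ‖y - xb‖ * ω ‖y - xb‖ ≤ u y) →
        (∀ z ∈ Ω, u xb + (inner ℝ p (yb - xb) : ℝ) - ‖yb - xb‖ * ω ‖yb - xb‖ +
            (inner ℝ q (z - yb) : ℝ) - ‖z - yb‖ * ω ‖z - yb‖ ≤ u z) →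
        ‖p - q‖ ≤ C₁ * ω (2 * dist xb yb) + C₂ * C * dist xb yb := by
  refine ⟨8 * 7 ^ n, by positivity, 8 * 7 ^ n, by positivity, ?_⟩
  intro C hC Ω _ _ hΩ u hu ω _ hωmono hω₀ xb hxb yb _ hne hball p q h1 h2
  have : Nontrivial (EuclideanSpace ℝ (Fin n)) := nontrivial_of_ne xb yb hne
  have hd : 0 < dist xb yb := dist_pos.2 hne
  have hdiam : 4 * dist xb yb ≤ diam Ω := by
    have := diam_mono hball hΩ
    rw [diam_closedBall_eq xb (by positivity)] at this
    linarith
  have hIcc : Icc 0 (2 * dist xb yb) ⊆ Ico 0 (2 * diam Ω) := Icc_subset_Ico_right (by linarith)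
  have hinf : 2 * dist xb yb ≤ infDist xb Ωᶜ := by
    have hcompl : Ωᶜ.Nonempty :=
      nonempty_compl.2 fun h => NormedSpace.unbounded_univ ℝ _ (h ▸ hΩ)
    exact (le_infDist hcompl).2 fun y hy =>
      not_lt.1 fun hlt => hy (hball (mem_closedBall'.2 hlt.le))
  exact hu.norm_sub_le_of_lower_bounds hC hxb hne hinf (hωmono.mono hIcc)
    (hω₀ _ (hIcc ⟨by positivity, le_rfl⟩)) h1 h2

/-- Lemma F.3: variant of Lemma F.2 where the second supporting
inequality is anchored at the value predicted by the first. -/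
theorem stmt_17 (n : ℕ) (hn : 1 ≤ n) :
    ∃ C₁ : ℝ, 0 < C₁ ∧ ∃ C₂ : ℝ, 0 < C₂ ∧
    ∀ C : ℝ, 0 ≤ C →
    ∀ (Ω : Set (EuclideanSpace ℝ (Fin n))), IsOpen Ω → IsConnected Ω →
      Bornology.IsBounded Ω →
      ∀ u : EuclideanSpace ℝ (Fin n) → ℝ, CanonicalQuasiSuperharmonic n C Ω u →
      ∀ ω : ℝ → ℝ, ContinuousOn ω (Ico 0 (2 * Metric.diam Ω)) →
        MonotoneOn ω (Ico 0 (2 * Metric.diam Ω)) →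
        (∀ t ∈ Ico (0 : ℝ) (2 * Metric.diam Ω), 0 ≤ ω t) →
      ∀ xb ∈ Ω, ∀ yb ∈ Ω, xb ≠ yb → closedBall xb (2 * dist xb yb) ⊆ Ω →
      ∀ p q : EuclideanSpace ℝ (Fin n),
        (∀ y ∈ Ω, u xb + (inner ℝ p (y - xb) : ℝ) - ‖y - xb‖ * ω ‖y - xb‖ ≤ u y) →
        (∀ z ∈ Ω, u xb + (inner ℝ p (yb - xb) : ℝ) - ‖yb - xb‖ * ω ‖yb - xb‖ +
            (inner ℝ q (z - yb) : ℝ) - ‖z - yb‖ * ω ‖z - yb‖ ≤ u z) →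
        ‖p - q‖ ≤ C₁ * ω (2 * dist xb yb) + C₂ * C * dist xb yb :=
  stmt_17_general n
end
end

section
/- Let n ≥ 1, let u : B₁ ∖ {0} → ℝ satisfy condition (★) with some radius r̄ ∈ (0, 1], and let v ∈ C²(B̄₁) (in particular sup_{B₁} ‖∇²v‖ < ∞). Assume liminf_{x → 0} (u − v)(x) = 0. Then for every ε > 0 there exists 0 < r̄_ε < r̄ such that inf_{x ∈ ∂B_r} (u(x) − v(x) − ε|x|) < 0 for all 0 < r < r̄_ε. -/
open Filter Metric Set MeasureTheory Topology

attribute [local instance] Matrix.normedAddCommGroup Matrix.normedSpace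

noncomputable section

/-!
Subtracting the tangent plane of `v` at the origin, `w(x) = u(x) - ∇v(0)·x` is again of the
form in (★), so its minimum over `∂B_r` is at most its value at any point of `B_r ∖ {0}`.
Since `u - v` comes within `εr/8` of `0` at such points, while `v` differs from its tangent
plane by at most `εr/4` on `B̄_r` for small `r`, the minimizer `y ∈ ∂B_r` of `w` satisfies
`u(y) - v(y) < εr = ε|y|`.
-/

open scoped InnerProductSpace Gradient

theorem DifferentiableAt.exists_forall_abs_sub_sub_inner_gradient_le {F : Type*}
    [NormedAddCommGroup F] [InnerProductSpace ℝ F] [CompleteSpace F] {v : F → ℝ} {x : F}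
    (hv : DifferentiableAt ℝ v x) {ε : ℝ} (hε : 0 < ε) :
    ∃ δ > 0, ∀ y, ‖y - x‖ < δ → |v y - v x - ⟪∇ v x, y - x⟫_ℝ| ≤ ε * ‖y - x‖ := by
  have := (hasGradientAt_iff_isLittleO.mp hv.hasGradientAt).def hε
  simpa only [Metric.eventually_nhds_iff, dist_eq_norm, Real.norm_eq_abs] using this

namespace StarCond

variable {n : ℕ} {u : EuclideanSpace ℝ (Fin n) → ℝ} {rbar r : ℝ}

/-- The `sInf` in (★) is a genuine infimum, not the junk value of an unbounded set. -/
theorem bddBelow (hstar : StarCond n u rbar) (hr : 0 < r) (hrb : r < rbar)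
    (V : EuclideanSpace ℝ (Fin n)) :
    BddBelow ((fun x => u x + ⟪V, x⟫_ℝ) '' (ball 0 r \ {0})) := by
  by_contra hunb
  obtain ⟨y₀, hy₀, -⟩ := (hstar V r hr hrb).1
  have hy₀r : ‖y₀‖ = r := mem_sphere_zero_iff_norm.mp hy₀
  -- Tilting `V` towards `y₀` makes the value at `y₀` equal to `-1` while keeping the
  -- function unbounded below, so (★) would give `0 = sInf ∅ ≤ -1`.
  set c := -(u y₀ + ⟪V, y₀⟫_ℝ + 1) / r ^ 2
  have hinner : ∀ x, ⟪V + c • y₀, x⟫_ℝ = ⟪V, x⟫_ℝ + c * ⟪y₀, x⟫_ℝ := fun x => by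
    rw [inner_add_left, real_inner_smul_left]
  have hunb' : ¬ BddBelow ((fun x => u x + ⟪V + c • y₀, x⟫_ℝ) '' (ball 0 r \ {0})) := by
    rintro ⟨b, hb⟩
    refine hunb ⟨b - |c| * (r * r), ?_⟩
    rintro _ ⟨x, hx, rfl⟩
    have hbx : b ≤ u x + ⟪V + c • y₀, x⟫_ℝ := hb ⟨x, hx, rfl⟩
    have htilt : |c * ⟪y₀, x⟫_ℝ| ≤ |c| * (r * r) := by
      rw [abs_mul]
      gcongr
      calc |⟪y₀, x⟫_ℝ| ≤ ‖y₀‖ * ‖x‖ := abs_real_inner_le_norm _ _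
        _ ≤ r * r := by
          rw [hy₀r]; gcongr; exact (mem_ball_zero_iff.mp hx.1).le
    rw [hinner] at hbx
    dsimp only
    linarith [le_abs_self (c * ⟪y₀, x⟫_ℝ)]
  have hleast := hstar (V + c • y₀) r hr hrb
  rw [csInf_of_not_bddBelow hunb', Real.sInf_empty] at hleast
  have hval : u y₀ + ⟪V + c • y₀, y₀⟫_ℝ = -1 := by
    rw [hinner, real_inner_self_eq_norm_sq, hy₀r, div_mul_cancel₀ _ (by positivity)]
    ring
  linarith [hleast.2 ⟨y₀, hy₀, rfl⟩]

theorem exists_mem_sphere_forall_le (hstar : StarCond n u rbar) (hr : 0 < r) (hrb : r < rbar)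
    (V : EuclideanSpace ℝ (Fin n)) :
    ∃ y ∈ sphere (0 : EuclideanSpace ℝ (Fin n)) r,
      ∀ x ∈ ball (0 : EuclideanSpace ℝ (Fin n)) r \ {0}, u y + ⟪V, y⟫_ℝ ≤ u x + ⟪V, x⟫_ℝ := by
  obtain ⟨⟨y, hy, hmin⟩, -⟩ := hstar V r hr hrb
  exact ⟨y, hy, fun x hx => hmin.le.trans <| csInf_le (hstar.bddBelow hr hrb V) ⟨x, hx, rfl⟩⟩

end StarCond

theorem stmt_18_general (n : ℕ) (u v : EuclideanSpace ℝ (Fin n) → ℝ)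
    (rbar : ℝ) (hrbar0 : 0 < rbar) (hstar : StarCond n u rbar)
    (hv : ContDiffOn ℝ 2 v (closedBall (0 : EuclideanSpace ℝ (Fin n)) 1))
    (hlim2 : ∀ ε : ℝ, 0 < ε →
      ∃ᶠ x in 𝓝[≠] (0 : EuclideanSpace ℝ (Fin n)), u x - v x < ε) :
    ∀ ε : ℝ, 0 < ε → ∃ rε : ℝ, 0 < rε ∧ rε < rbar ∧
      ∀ r : ℝ, 0 < r → r < rε →
        ∃ x ∈ sphere (0 : EuclideanSpace ℝ (Fin n)) r, u x - v x - ε * ‖x‖ < 0 := by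
  intro ε hε
  have hdiff : DifferentiableAt ℝ v 0 :=
    (hv.differentiableOn two_ne_zero).differentiableAt (closedBall_mem_nhds 0 one_pos)
  obtain ⟨δ, hδ, htangent⟩ :=
    hdiff.exists_forall_abs_sub_sub_inner_gradient_le (by positivity : 0 < ε / 4)
  simp only [sub_zero] at htangent
  refine ⟨min δ rbar / 2, by positivity, by linarith [min_le_right δ rbar], fun r hr hrε => ?_⟩
  have hrδ : r < δ := by linarith [min_le_left δ rbar]
  have hrb : r < rbar := by linarith [min_le_right δ rbar]
  obtain ⟨x₀, hux₀, hx₀⟩ := ((hlim2 (ε * r / 8) (by positivity)).and_eventually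
    (sdiff_mem_nhdsWithin_compl (ball_mem_nhds 0 hr) {0})).exists
  obtain ⟨y, hy, hmin⟩ := hstar.exists_mem_sphere_forall_le hr hrb (-∇ v 0)
  have hx₀r : ‖x₀‖ < r := mem_ball_zero_iff.mp hx₀.1
  have hyr : ‖y‖ = r := mem_sphere_zero_iff_norm.mp hy
  refine ⟨y, hy, ?_⟩
  have hwy := hmin x₀ hx₀
  have hvy := abs_le.mp (htangent y (by linarith))
  have hvx₀ := abs_le.mp (htangent x₀ (by linarith))
  simp only [inner_neg_left] at hwy
  rw [hyr] at hvy ⊢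
  linarith [mul_lt_mul_of_pos_left hx₀r hε]

/-- Lemma 2.1: if `liminf_{x→0}(u - v) = 0` and `u` satisfies condition
(★), then for every `ε > 0` the infimum of `u - v - ε|x|` over small spheres is negative. -/
theorem stmt_18 (n : ℕ) (hn : 1 ≤ n) (u v : EuclideanSpace ℝ (Fin n) → ℝ)
    (rbar : ℝ) (hrbar0 : 0 < rbar) (hrbar1 : rbar ≤ 1) (hstar : StarCond n u rbar)
    (hv : ContDiffOn ℝ 2 v (closedBall (0 : EuclideanSpace ℝ (Fin n)) 1))
    (hlim1 : ∀ ε : ℝ, 0 < ε →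
      ∀ᶠ x in 𝓝[≠] (0 : EuclideanSpace ℝ (Fin n)), -ε < u x - v x)
    (hlim2 : ∀ ε : ℝ, 0 < ε →
      ∃ᶠ x in 𝓝[≠] (0 : EuclideanSpace ℝ (Fin n)), u x - v x < ε) :
    ∀ ε : ℝ, 0 < ε → ∃ rε : ℝ, 0 < rε ∧ rε < rbar ∧
      ∀ r : ℝ, 0 < r → r < rε →
        ∃ x ∈ sphere (0 : EuclideanSpace ℝ (Fin n)) r, u x - v x - ε * ‖x‖ < 0 :=
  stmt_18_general n u v rbar hrbar0 hstar hv hlim2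
end
end

section
/- Let n ≥ 2 and 1 ≤ k ≤ n−1, and let U ⊆ S^{n×n} be an open convex set such that (a) aM ∈ U for every M ∈ U and every constant a > 0, and (b) every N ∈ S^{n×n} whose eigenvalues consist of 0 with multiplicity k and 1 with multiplicity n−k belongs to U. Then U satisfies Property P_k. -/
open Filter Metric Set MeasureTheory Topology

attribute [local instance] Matrix.normedAddCommGroup Matrix.normedSpace

noncomputable section

/-- Property P_k: for every `C > 0` there are `δ̄, ε̄ > 0` such that for all `0 < ε < ε̄`,
every symmetric `M` in the closure of `U` with `M ≤ C·I`, and every symmetric `N` whose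
eigenvalues consist of `-δ̄` with multiplicity `k` and `1` with multiplicity `n - k`,
one has `M + ε N ∈ U`. -/
def PropertyPk (n k : ℕ) (U : Set (Matrix (Fin n) (Fin n) ℝ)) : Prop :=
  ∀ C : ℝ, 0 < C → ∃ δb : ℝ, 0 < δb ∧ ∃ εb : ℝ, 0 < εb ∧
    ∀ ε : ℝ, 0 < ε → ε < εb →
      ∀ M ∈ closure U, M.IsHermitian →
        ((C • (1 : Matrix (Fin n) (Fin n) ℝ)) - M).PosSemidef →
        ∀ N : Matrix (Fin n) (Fin n) ℝ, N.IsHermitian →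
          (∀ i : Fin n, sortedEig n N i = if (i : ℕ) < k then -δb else 1) →
          M + ε • N ∈ U
/-! The orthogonal projections of rank `n - k` form a compact subset of `U`, so `U` contains an
`η`-neighbourhood of them. A symmetric `N` with eigenvalues `-δ` (`k` times) and `1` is
`P - δ (1 - P)` for the projection `P = (N + δ)/(1 + δ)`, hence lies in `U` once `δ < η`. Finally
an open convex cone satisfies `closure U + U ⊆ U`, so `M + εN ∈ U` for `M ∈ closure U`. -/

theorem sum_lt_sum_of_monotone {ι : Type*} [Fintype ι] [LinearOrder ι] {g h : ι → ℝ}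
    (hg : Monotone g) (hh : Monotone h) (hg1 : ∀ j, g j ≤ 1) (hh0 : ∀ j, 0 ≤ h j) {i : ι}
    (hgi : g i = 0) (hhi : h i = 1) : ∑ j, g j < ∑ j, h j := by
  refine Finset.sum_lt_sum (fun j _ => ?_) ⟨i, Finset.mem_univ _, by rw [hgi, hhi]; norm_num⟩
  rcases le_total j i with hji | hij
  · linarith [hg hji, hh0 j]
  · linarith [hh hij, hg1 j]

theorem eq_of_monotone_zero_one_of_sum_eq {ι : Type*} [Fintype ι] [LinearOrder ι] {g h : ι → ℝ}
    (hg : Monotone g) (hh : Monotone h) (hg01 : ∀ i, g i = 0 ∨ g i = 1)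
    (hh01 : ∀ i, h i = 0 ∨ h i = 1) (hsum : ∑ i, g i = ∑ i, h i) : g = h := by
  have hle1 {f : ι → ℝ} (hf : ∀ i, f i = 0 ∨ f i = 1) (i : ι) : f i ≤ 1 := by
    rcases hf i with h' | h' <;> simp [h']
  have hnonneg {f : ι → ℝ} (hf : ∀ i, f i = 0 ∨ f i = 1) (i : ι) : 0 ≤ f i := by
    rcases hf i with h' | h' <;> simp [h']
  funext i
  rcases hg01 i with hgi | hgi <;> rcases hh01 i with hhi | hhi
  · rw [hgi, hhi]
  · exact absurd hsum (sum_lt_sum_of_monotone hg hh (hle1 hg01) (hnonneg hh01) hgi hhi).ne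
  · exact absurd hsum (sum_lt_sum_of_monotone hh hg (hle1 hh01) (hnonneg hg01) hhi hgi).ne'
  · rw [hgi, hhi]

theorem Convex.add_mem_of_mem_closure {E : Type*} [AddCommGroup E] [Module ℝ E]
    [TopologicalSpace E] [IsTopologicalAddGroup E] [ContinuousConstSMul ℝ E] {U : Set E}
    (hUc : Convex ℝ U) (hUo : IsOpen U) (hscale : ∀ x ∈ U, ∀ a : ℝ, 0 < a → a • x ∈ U)
    {x y : E} (hx : x ∈ closure U) (hy : y ∈ U) : x + y ∈ U := by
  have hmid : (1 / 2 : ℝ) • x + (1 / 2 : ℝ) • y ∈ U := by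
    rw [← hUo.interior_eq] at hy ⊢
    exact hUc.combo_closure_interior_mem_interior hx hy (by norm_num) (by norm_num) (by norm_num)
  simpa [smul_add, smul_smul] using hscale _ hmid 2 two_pos

namespace Matrix

variable {n : ℕ}

namespace IsHermitian

variable {A : Matrix (Fin n) (Fin n) ℝ}

theorem sortedEig_eq_s19 (hA : A.IsHermitian) :
    sortedEig n A = hA.eigenvalues ∘ Tuple.sort hA.eigenvalues := by
  rw [sortedEig, dif_pos hA]

theorem monotone_sortedEig (hA : A.IsHermitian) : Monotone (sortedEig n A) := by
  rw [hA.sortedEig_eq_s19]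
  exact Tuple.monotone_sort _

theorem sum_sortedEig (hA : A.IsHermitian) : ∑ i, sortedEig n A i = A.trace := by
  rw [hA.sortedEig_eq_s19, hA.trace_eq_sum_eigenvalues]
  exact Equiv.sum_comp _ _

theorem sortedEig_mem_spectrum (hA : A.IsHermitian) (i : Fin n) :
    sortedEig n A i ∈ spectrum ℝ A := by
  rw [hA.sortedEig_eq_s19]
  exact hA.eigenvalues_mem_spectrum_real _

theorem exists_sortedEig_eq_of_mem_spectrum (hA : A.IsHermitian) {x : ℝ}
    (hx : x ∈ spectrum ℝ A) : ∃ i, sortedEig n A i = x := by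
  rw [hA.spectrum_real_eq_range_eigenvalues] at hx
  obtain ⟨j, rfl⟩ := hx
  exact ⟨(Tuple.sort hA.eigenvalues).symm j, by simp [hA.sortedEig_eq_s19]⟩

theorem abs_apply_le_one_of_isIdempotentElem (hA : A.IsHermitian) (hAA : IsIdempotentElem A)
    (i j : Fin n) : |A i j| ≤ 1 := by
  have hdiag : ∑ l, A i l * A i l = A i i := by
    conv_rhs => rw [← hAA.eq, mul_apply]
    exact Finset.sum_congr rfl fun l _ => by rw [← hA.apply l i, star_trivial]
  have hle : ∀ j, A i j * A i j ≤ A i i := fun j =>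
    hdiag ▸ Finset.single_le_sum (f := fun l => A i l * A i l) (fun l _ => mul_self_nonneg _)
      (Finset.mem_univ j)
  have hii : A i i ≤ 1 := by nlinarith [hle i]
  exact abs_le_one_iff_mul_self_le_one.mpr ((hle j).trans hii)

theorem norm_le_one_of_isIdempotentElem (hA : A.IsHermitian) (hAA : IsIdempotentElem A) :
    ‖A‖ ≤ 1 :=
  (norm_le_iff zero_le_one).mpr fun i j => by
    rw [Real.norm_eq_abs]
    exact hA.abs_apply_le_one_of_isIdempotentElem hAA i j

end IsHermitian

/-- Orthogonal projections of rank `n - k`. The trace is written as the sum of the eigenvalue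
pattern of `sortedEig`, so that no truncated subtraction `n - k` occurs. -/
def corankProjections (n k : ℕ) : Set (Matrix (Fin n) (Fin n) ℝ) :=
  {P | P.IsHermitian ∧ IsIdempotentElem P ∧ P.trace = ∑ i : Fin n, if (i : ℕ) < k then 0 else 1}

theorem sortedEig_eq_of_mem_corankProjections {k : ℕ} {P : Matrix (Fin n) (Fin n) ℝ}
    (hP : P ∈ corankProjections n k) (i : Fin n) :
    sortedEig n P i = if (i : ℕ) < k then 0 else 1 := by
  obtain ⟨hPh, hPP, htr⟩ := hP
  refine congrFun (eq_of_monotone_zero_one_of_sum_eq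
    (h := fun i : Fin n => if (i : ℕ) < k then 0 else 1) hPh.monotone_sortedEig ?_
    (fun j => hPP.spectrum_subset ℝ (hPh.sortedEig_mem_spectrum j)) (fun j => ?_) ?_) i
  · intro a b (hab : (a : ℕ) ≤ b)
    dsimp only
    split_ifs <;> first | omega | norm_num
  · split_ifs <;> simp
  · rw [hPh.sum_sortedEig, htr]

theorem isCompact_corankProjections (k : ℕ) : IsCompact (corankProjections n k) := by
  refine Metric.isCompact_of_isClosed_isBounded ?_
    ((Metric.isBounded_closedBall (x := 0) (r := 1)).subset fun P hP => ?_)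
  · exact (isClosed_eq (by fun_prop) (by fun_prop)).inter
      ((isClosed_eq (by fun_prop) (by fun_prop)).inter (isClosed_eq (by fun_prop) (by fun_prop)))
  · rw [Metric.mem_closedBall, dist_zero_right]
    exact hP.1.norm_le_one_of_isIdempotentElem hP.2.1

theorem smul_add_smul_one_mem_corankProjections {k : ℕ} {N : Matrix (Fin n) (Fin n) ℝ}
    (hN : N.IsHermitian) {δ : ℝ} (hδ : 0 < δ)
    (hNeig : ∀ i, sortedEig n N i = if (i : ℕ) < k then -δ else 1) :
    (1 + δ)⁻¹ • (N + δ • 1) ∈ corankProjections n k := by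
  have hP : (1 + δ)⁻¹ • (N + δ • 1) = cfc (fun x => (1 + δ)⁻¹ * (x + δ)) N := by
    rw [cfc_const_mul _ (fun x => x + δ) N, cfc_add N (fun x => x) (fun _ => δ), cfc_id' ℝ N,
      cfc_const δ N, Algebra.algebraMap_eq_smul_one]
  have hPh : ((1 + δ)⁻¹ • (N + δ • 1)).IsHermitian := hP ▸ cfc_predicate _ N
  have hPeig : ∀ i, (1 + δ)⁻¹ * (sortedEig n N i + δ) = if (i : ℕ) < k then 0 else 1 := by
    intro i
    rw [hNeig i]
    split_ifs
    · simp
    · exact inv_mul_cancel₀ (by positivity)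
  refine ⟨hPh, (isIdempotentElem_iff_spectrum_subset ℝ _ hPh.isSelfAdjoint).mpr ?_, ?_⟩
  · rw [hP, cfc_map_spectrum _ N]
    rintro _ ⟨x, hx, rfl⟩
    obtain ⟨i, rfl⟩ := hN.exists_sortedEig_eq_of_mem_spectrum hx
    dsimp only
    rw [hPeig i]
    split_ifs <;> simp
  · have hcard : δ • (Fintype.card (Fin n) : ℝ) = ∑ _i : Fin n, δ := by simp [mul_comm]
    rw [trace_smul, trace_add, trace_smul, trace_one, ← hN.sum_sortedEig, hcard,
      ← Finset.sum_add_distrib, Finset.smul_sum]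
    exact Finset.sum_congr rfl fun i _ => hPeig i

theorem exists_pos_mem_of_sortedEig_eq {k : ℕ} {U : Set (Matrix (Fin n) (Fin n) ℝ)}
    (hUo : IsOpen U) (hU : corankProjections n k ⊆ U) :
    ∃ δ > 0, ∀ N : Matrix (Fin n) (Fin n) ℝ, N.IsHermitian →
      (∀ i, sortedEig n N i = if (i : ℕ) < k then -δ else 1) → N ∈ U := by
  obtain ⟨η, hη, hηU⟩ := (isCompact_corankProjections k).exists_thickening_subset_open hUo hU
  refine ⟨η / 2, half_pos hη, fun N hN hNeig => hηU ?_⟩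
  set δ := η / 2
  set P := (1 + δ)⁻¹ • (N + δ • 1)
  have hP : P ∈ corankProjections n k :=
    smul_add_smul_one_mem_corankProjections hN (half_pos hη) hNeig
  have hNP : N - P = -(δ • (1 - P)) := by
    have h : (1 + δ) • P = N + δ • 1 := smul_inv_smul₀ (by positivity) _
    linear_combination (norm := module) -h
  refine Metric.mem_thickening_iff.mpr ⟨P, hP, ?_⟩
  rw [dist_eq_norm, hNP, norm_neg, norm_smul, Real.norm_of_nonneg (by positivity)]
  calc δ * ‖1 - P‖ ≤ δ * 1 := by
        gcongr
        exact (isHermitian_one.sub hP.1).norm_le_one_of_isIdempotentElem hP.2.1.one_sub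
    _ < η := by rw [mul_one]; exact half_lt_self hη

end Matrix

theorem stmt_19_general (n k : ℕ)
    (U : Set (Matrix (Fin n) (Fin n) ℝ)) (hUopen : IsOpen U) (hUconv : Convex ℝ U)
    (hscale : ∀ M ∈ U, ∀ a : ℝ, 0 < a → a • M ∈ U)
    (hNmem : ∀ N : Matrix (Fin n) (Fin n) ℝ, N.IsHermitian →
      (∀ i : Fin n, sortedEig n N i = if (i : ℕ) < k then 0 else 1) → N ∈ U) :
    PropertyPk n k U := by
  obtain ⟨δ, hδ, hδU⟩ := Matrix.exists_pos_mem_of_sortedEig_eq hUopen fun P hP =>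
    hNmem P hP.1 (Matrix.sortedEig_eq_of_mem_corankProjections hP)
  refine fun _ _ => ⟨δ, hδ, 1, one_pos, fun ε hε _ M hM _ _ N hN hNeig => ?_⟩
  exact hUconv.add_mem_of_mem_closure hUopen hscale hM (hscale N (hδU N hN hNeig) ε hε)

/-- Remark 1.3 (ii): an open convex cone-like set `U` containing all
symmetric matrices with eigenvalues `0` (multiplicity `k`) and `1` (multiplicity `n - k`)
satisfies Property P_k. -/
theorem stmt_19 (n k : ℕ) (hn : 2 ≤ n) (hk1 : 1 ≤ k) (hk2 : k ≤ n - 1)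
    (U : Set (Matrix (Fin n) (Fin n) ℝ)) (hUopen : IsOpen U) (hUconv : Convex ℝ U)
    (hscale : ∀ M ∈ U, ∀ a : ℝ, 0 < a → a • M ∈ U)
    (hNmem : ∀ N : Matrix (Fin n) (Fin n) ℝ, N.IsHermitian →
      (∀ i : Fin n, sortedEig n N i = if (i : ℕ) < k then 0 else 1) → N ∈ U) :
    PropertyPk n k U :=
  stmt_19_general n k U hUopen hUconv hscale hNmem
end
end
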